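/- arXiv:1908.08792 — 7 statements merged into one kernel-verified Lean document; each statement's English description precedes it below -/
import Mathlib

section
/- Let q be a prime power, C a linear [n,k] code over F_q with dual distance d⊥, and J a set of coordinates with 1 ≤ |J| = j ≤ d⊥ − 1. Then the number of q-element subsets {c₁,…,c_q} of C such that for every position i ∈ J the values proj_i(c₁),…,proj_i(c_q) are pairwise distinct (i.e., enumerate all of F_q) equals (q!)^{j−1} · q^{q(k−j)}. -/
open Module


/-- The restriction-to-`J` linear map on a code. -/
noncomputable def stmt3phi {F : Type*} [Field F] {n : ℕ} (C : Submodule F (Fin n → F))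
    (J : Finset (Fin n)) : C →ₗ[F] (↥J → F) :=
  (LinearMap.funLeft F F (Subtype.val : ↥J → Fin n)).comp C.subtype

theorem stmt3phi_apply {F : Type*} [Field F] {n : ℕ} (C : Submodule F (Fin n → F))
    (J : Finset (Fin n)) (c : C) (i : ↥J) : stmt3phi C J c i = (c : Fin n → F) i.1 := rfl

/-- Counting the "normalized labelings". -/
theorem stmt3_countB {F : Type*} [Field F] [Fintype F] {n : ℕ} (C : Submodule F (Fin n → F))
    (J : Finset (Fin n)) (i₀ : ↥J) (hsurj : Function.Surjective (stmt3phi C J)) :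
    Nat.card {f : F → C // (∀ a : F, (f a : Fin n → F) i₀.1 = a) ∧
        ∀ i ∈ J, Function.Injective fun a : F => (f a : Fin n → F) i}
      = (Fintype.card F).factorial ^ (J.card - 1) *
        Nat.card (LinearMap.ker (stmt3phi C J)) ^ Fintype.card F := by
  classical
  set φ := stmt3phi C J with hφdef
  obtain ⟨s, hs⟩ := φ.exists_rightInverse_of_surjective (LinearMap.range_eq_top.mpr hsurj)
  have hsy : ∀ y, φ (s y) = y := fun y => LinearMap.ext_iff.mp hs y
  let M := {m : F → (↥J → F) // (∀ a, m a i₀ = a) ∧ ∀ i : ↥J, Function.Injective fun a => m a i}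
  have key : ∀ (m : F → (↥J → F)) (kf : F → LinearMap.ker φ) (a : F),
      φ (s (m a) + ((kf a : C))) = m a := by
    intro m kf a
    rw [map_add, hsy, LinearMap.mem_ker.mp (kf a).2, add_zero]
  let e : {f : F → C // (∀ a : F, (f a : Fin n → F) i₀.1 = a) ∧
        ∀ i ∈ J, Function.Injective fun a : F => (f a : Fin n → F) i}
      ≃ M × (F → LinearMap.ker φ) :=
  { toFun := fun f => (⟨fun a => φ (f.1 a),
      fun a => f.2.1 a,
      fun i => f.2.2 i.1 i.2⟩,
      fun a => ⟨f.1 a - s (φ (f.1 a)), by simp [LinearMap.mem_ker, map_sub, hsy]⟩),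
    invFun := fun p => ⟨fun a => s (p.1.1 a) + ((p.2 a : C)),
      ⟨fun a => by
        have h := congrFun (key p.1.1 p.2 a) i₀
        rw [stmt3phi_apply] at h
        rw [h, p.1.2.1 a],
      fun i hi x y hxy => by
        have hx := congrFun (key p.1.1 p.2 x) ⟨i, hi⟩
        have hy := congrFun (key p.1.1 p.2 y) ⟨i, hi⟩
        rw [stmt3phi_apply] at hx hy
        exact p.1.2.2 ⟨i, hi⟩ (hx.symm.trans (hxy.trans hy))⟩⟩,
    left_inv := fun f => Subtype.ext (funext fun a => by simp),
    right_inv := fun p => by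
      refine Prod.ext (Subtype.ext (funext fun a => key p.1.1 p.2 a)) (funext fun a => ?_)
      refine Subtype.ext ?_
      show s (p.1.1 a) + ((p.2 a : C)) - s (φ (s (p.1.1 a) + ((p.2 a : C)))) = (p.2 a : C)
      rw [key p.1.1 p.2 a, add_sub_cancel_left] }
  rw [Nat.card_congr e, Nat.card_prod, Nat.card_fun, Nat.card_eq_fintype_card (α := F)]
  congr 1
  -- count M
  let e2 : M ≃ ({i : ↥J // i ≠ i₀} → (F ≃ F)) :=
  { toFun := fun m i => Equiv.ofBijective (fun a => m.1 a i.1)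
      (Finite.injective_iff_bijective.mp (m.2.2 i.1)),
    invFun := fun g => ⟨fun a i => if h : i = i₀ then a else g ⟨i, h⟩ a,
      ⟨fun a => dif_pos rfl, fun i x y hxy => by
        by_cases h : i = i₀
        · simpa [h] using hxy
        · exact (g ⟨i, h⟩).injective (by simpa [dif_neg h] using hxy)⟩⟩,
    left_inv := fun m => Subtype.ext (funext fun a => funext fun i => by
      by_cases h : i = i₀
      · subst h; simpa using (m.2.1 a).symm
      · simp [h, Equiv.ofBijective]),
    right_inv := fun g => funext fun i => Equiv.ext fun a => by
      simp [Equiv.ofBijective, i.2] }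
  rw [Nat.card_congr e2, Nat.card_fun]
  have h1 : Nat.card (F ≃ F) = (Fintype.card F).factorial := by
    rw [Nat.card_eq_fintype_card]; exact Fintype.card_perm
  have h2 : Nat.card {i : ↥J // i ≠ i₀} = J.card - 1 := by
    rw [Nat.card_eq_fintype_card]
    calc Fintype.card {i : ↥J // i ≠ i₀}
        = Fintype.card ↥J - Fintype.card {i : ↥J // i = i₀} := Fintype.card_subtype_compl _
      _ = J.card - 1 := by rw [Fintype.card_subtype_eq, Fintype.card_coe]
  rw [h1, h2]

theorem stmt3_cardA {F : Type*} [Field F] [Fintype F] {n : ℕ} (C : Submodule F (Fin n → F))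
    (J : Finset (Fin n)) (i₀ : Fin n) (hi₀ : i₀ ∈ J) :
    Nat.card {S : Finset (Fin n → F) // ↑S ⊆ (C : Set (Fin n → F)) ∧ S.card = Fintype.card F ∧
        ∀ i ∈ J, Set.InjOn (fun c : Fin n → F => c i) ↑S}
      = Nat.card {f : F → C // (∀ a : F, (f a : Fin n → F) i₀ = a) ∧
        ∀ i ∈ J, Function.Injective fun a : F => (f a : Fin n → F) i} := by
  classical
  symm
  refine Nat.card_eq_of_bijective (fun f =>
    ⟨Finset.image (fun a => ((f.1 a : Fin n → F))) Finset.univ, ?_, ?_, ?_⟩) ⟨?_, ?_⟩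
  · intro x hx
    obtain ⟨a, -, rfl⟩ := Finset.mem_image.mp hx
    exact (f.1 a).2
  · rw [Finset.card_image_of_injective _ (fun a b hab => by
      have := congrFun hab i₀; rwa [f.2.1 a, f.2.1 b] at this), Finset.card_univ]
  · intro i hi x hx y hy hxy
    obtain ⟨a, -, rfl⟩ := Finset.mem_image.mp hx
    obtain ⟨b, -, rfl⟩ := Finset.mem_image.mp hy
    rw [f.2.2 i hi hxy]
  · -- injective
    intro f g hfg
    have himg : Finset.image (fun a => ((f.1 a : Fin n → F))) Finset.univ
        = Finset.image (fun a => ((g.1 a : Fin n → F))) Finset.univ :=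
      congrArg Subtype.val hfg
    refine Subtype.ext (funext fun a => ?_)
    have : ((f.1 a : Fin n → F)) ∈ Finset.image (fun a => ((g.1 a : Fin n → F))) Finset.univ := by
      rw [← himg]; exact Finset.mem_image_of_mem _ (Finset.mem_univ a)
    obtain ⟨b, -, hb⟩ := Finset.mem_image.mp this
    have hab : b = a := by
      have := congrFun hb i₀; rwa [g.2.1 b, f.2.1 a] at this
    subst hab
    exact Subtype.ext hb.symm
  · -- surjective
    rintro ⟨S, hsub, hcard, hinj⟩
    have ebij : Function.Bijective (fun c : ↥S => (c : Fin n → F) i₀) := by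
      refine (Fintype.bijective_iff_injective_and_card _).mpr ⟨?_, by
        rw [Fintype.card_coe, hcard]⟩
      intro c c' hcc
      exact Subtype.ext (hinj i₀ hi₀ (Finset.mem_coe.mpr c.2) (Finset.mem_coe.mpr c'.2) hcc)
    set eqv := Equiv.ofBijective _ ebij with heqv
    refine ⟨⟨fun a => ⟨(eqv.symm a : ↥S), hsub (Finset.mem_coe.mpr (eqv.symm a).2)⟩,
      fun a => ?_, fun i hi x y hxy => ?_⟩, ?_⟩
    · exact eqv.apply_symm_apply a
    · have : ((eqv.symm x : ↥S) : Fin n → F) = ((eqv.symm y : ↥S) : Fin n → F) :=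
        hinj i hi (Finset.mem_coe.mpr (eqv.symm x).2) (Finset.mem_coe.mpr (eqv.symm y).2) hxy
      have h2 : eqv.symm x = eqv.symm y := Subtype.ext this
      simpa using congrArg eqv h2
    · refine Subtype.ext ?_
      show Finset.image _ Finset.univ = S
      refine Finset.eq_of_subset_of_card_le (fun x hx => ?_) ?_
      · obtain ⟨a, -, rfl⟩ := Finset.mem_image.mp hx
        exact (eqv.symm a).2
      · rw [Finset.card_image_of_injective _ (fun a b hab => by
          have := congrFun hab i₀
          rwa [show ((eqv.symm a : ↥S) : Fin n → F) i₀ = a from eqv.apply_symm_apply a,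
            show ((eqv.symm b : ↥S) : Fin n → F) i₀ = b from eqv.apply_symm_apply b] at this),
          Finset.card_univ, hcard]
theorem stmt3_surj {F : Type*} [Field F] [Fintype F] {n d j : ℕ}
    (C : Submodule F (Fin n → F))
    (hd : ∀ v : Fin n → F, (∀ c ∈ C, ∑ i, v i * c i = 0) → v ≠ 0 →
      d ≤ {i : Fin n | v i ≠ 0}.ncard)
    (J : Finset (Fin n)) (hJcard : J.card = j) (hj1 : 1 ≤ j) (hjd : j ≤ d - 1) :
    Function.Surjective (stmt3phi C J) := by
  classical
  rw [← LinearMap.range_eq_top]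
  by_contra hne
  obtain ⟨g, hg0, hgbot⟩ := (LinearMap.range (stmt3phi C J)).exists_dual_map_eq_bot_of_lt_top
    (lt_top_iff_ne_top.mpr hne) inferInstance
  set w : ↥J → F := fun i => g (fun jj => if i = jj then 1 else 0) with hw
  set v : Fin n → F := fun i => if h : i ∈ J then w ⟨i, h⟩ else 0 with hv
  have hsum : ∀ x : ↥J → F, g x = ∑ i, x i * w i := by
    intro x
    rw [LinearMap.pi_apply_eq_sum_univ g x]
    simp [hw, smul_eq_mul]
  have hgker : ∀ c : C, g (stmt3phi C J c) = 0 := by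
    intro c
    have hmem : g (stmt3phi C J c) ∈ Submodule.map g (LinearMap.range (stmt3phi C J)) :=
      Submodule.mem_map_of_mem (LinearMap.mem_range_self _ c)
    rw [hgbot] at hmem
    exact (Submodule.mem_bot F).mp hmem
  have hvperp : ∀ c ∈ C, ∑ i, v i * c i = 0 := by
    intro c hc
    have h1 : ∑ i ∈ J, v i * c i = ∑ i, v i * c i :=
      Finset.sum_subset (Finset.subset_univ J) (fun x _ hx => by simp [hv, hx])
    rw [← h1]
    have h2 : ∑ i ∈ J, v i * c i = ∑ i : ↥J, v i.1 * c i.1 :=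
      (Finset.sum_coe_sort J (fun i => v i * c i)).symm
    rw [h2]
    have h3 : ∀ i : ↥J, v i.1 * c i.1 = (stmt3phi C J ⟨c, hc⟩) i * w i := by
      intro i
      have : v i.1 = w i := dif_pos i.2
      rw [this, mul_comm]
      rfl
    rw [Finset.sum_congr rfl (fun i _ => h3 i), ← hsum, hgker]
  have hvne : v ≠ 0 := by
    intro h0
    apply hg0
    refine LinearMap.ext fun x => ?_
    rw [hsum]
    have hwz : ∀ i : ↥J, w i = 0 := by
      intro i
      have : v i.1 = w i := dif_pos i.2
      rw [← this, h0]
      rfl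
    simp [hwz]
  have hle : {i : Fin n | v i ≠ 0}.ncard ≤ j := by
    have hsubJ : {i : Fin n | v i ≠ 0} ⊆ ↑J := by
      intro i hi
      by_contra hiJ
      exact hi (dif_neg hiJ)
    calc {i : Fin n | v i ≠ 0}.ncard ≤ (↑J : Set (Fin n)).ncard :=
          Set.ncard_le_ncard hsubJ J.finite_toSet
      _ = j := by rw [Set.ncard_coe_finset, hJcard]
  have := hd v hvperp hvne
  omega

theorem stmt_3 (q n k d j : ℕ) (F : Type*) [Field F] [Fintype F] (hF : Fintype.card F = q)
    (C : Submodule F (Fin n → F)) (hk : Module.finrank F C = k)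
    (hd : ∀ v : Fin n → F, (∀ c ∈ C, ∑ i, v i * c i = 0) → v ≠ 0 →
      d ≤ {i : Fin n | v i ≠ 0}.ncard)
    (J : Finset (Fin n)) (hJcard : J.card = j) (hj1 : 1 ≤ j) (hjd : j ≤ d - 1) :
    {S : Finset (Fin n → F) | ↑S ⊆ (C : Set (Fin n → F)) ∧ S.card = q ∧
      ∀ i ∈ J, Set.InjOn (fun c : Fin n → F => c i) ↑S}.ncard
      = q.factorial ^ (j - 1) * q ^ (q * (k - j)) := by
  classical
  subst hF hJcard hk
  obtain ⟨i₀, hi₀⟩ := Finset.card_pos.mp (show 0 < J.card by omega)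
  have hsurj := stmt3_surj C hd J rfl hj1 hjd
  have hrank : Module.finrank F (LinearMap.ker (stmt3phi C J)) = Module.finrank F C - J.card := by
    have h := LinearMap.finrank_range_add_finrank_ker (stmt3phi C J)
    rw [LinearMap.range_eq_top.mpr hsurj, finrank_top, Module.finrank_pi, Fintype.card_coe] at h
    omega
  have hcardker : Nat.card (LinearMap.ker (stmt3phi C J))
      = Fintype.card F ^ (Module.finrank F C - J.card) := by
    letI : Fintype (LinearMap.ker (stmt3phi C J)) := Fintype.ofFinite _
    rw [Nat.card_eq_fintype_card, card_eq_pow_finrank (K := F), hrank]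
  have key : Nat.card {S : Finset (Fin n → F) // ↑S ⊆ (C : Set (Fin n → F)) ∧
        S.card = Fintype.card F ∧ ∀ i ∈ J, Set.InjOn (fun c : Fin n → F => c i) ↑S}
      = (Fintype.card F).factorial ^ (J.card - 1)
        * Fintype.card F ^ (Fintype.card F * (Module.finrank F C - J.card)) := by
    rw [stmt3_cardA C J i₀ hi₀, stmt3_countB C J ⟨i₀, hi₀⟩ hsurj, hcardker, ← pow_mul,
      Nat.mul_comm (Module.finrank F C - J.card) (Fintype.card F)]
  rw [← Nat.card_coe_set_eq]
  exact key
end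

section
/- Let q ≥ 2 and let G be an abelian group of order q. For the code C = {(x₁,…,x_{n−1}, x₁+⋯+x_{n−1}) : xᵢ ∈ G} ⊆ Gⁿ and any 1 ≤ i ≤ n−1, the number of q-element subsets of C that are simultaneously separated at all coordinates in a fixed i-element set T ⊆ {1,…,n} equals (q!)^{i−1} · q^{q(n−1−i)}. -/
section aux
variable {G : Type*} [AddCommGroup G] {n : ℕ}

def defectAux (n : ℕ) (f : Fin (n + 1) → G) : G :=
  (∑ j : Fin n, f j.castSucc) - f (Fin.last n)

lemma mem_code_iff_defect (f : Fin (n + 1) → G) :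
    f (Fin.last n) = ∑ j : Fin n, f j.castSucc ↔ defectAux n f = 0 := by
  rw [defectAux, sub_eq_zero, eq_comm]

lemma defect_update (f : Fin (n + 1) → G) (j₀ : Fin (n + 1)) (x : G) :
    defectAux n (Function.update f j₀ x)
      = defectAux n f + (if j₀ = Fin.last n then f j₀ - x else x - f j₀) := by
  by_cases h : j₀ = Fin.last n
  · subst h
    simp only [if_pos rfl, defectAux, Function.update_self]
    rw [Finset.sum_congr rfl fun j _ =>
      Function.update_of_ne (Fin.castSucc_lt_last j).ne x f]
    exact (sub_add_sub_cancel _ _ _).symm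
  · obtain ⟨k, rfl⟩ := Fin.exists_castSucc_eq.mpr h
    simp only [if_neg h, defectAux]
    rw [Function.update_of_ne (Fin.castSucc_lt_last k).ne' x f]
    have key : (fun j : Fin n => Function.update f k.castSucc x j.castSucc)
        = Function.update (fun j : Fin n => f j.castSucc) k x := by
      funext j
      by_cases hj : j = k
      · subst hj; simp
      · rw [Function.update_of_ne (fun hc => hj (Fin.castSucc_injective n hc)) x f,
          Function.update_of_ne hj]
    calc (∑ j : Fin n, Function.update f k.castSucc x j.castSucc) - f (Fin.last n)
        = (∑ j : Fin n, Function.update (fun j : Fin n => f j.castSucc) k x j)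
            - f (Fin.last n) := by rw [key]
      _ = (x + ∑ j ∈ Finset.univ \ {k}, f j.castSucc) - f (Fin.last n) := by
            rw [Finset.sum_update_of_mem (Finset.mem_univ k)]
      _ = _ := by
            have hs : (∑ j : Fin n, f j.castSucc)
                = f k.castSucc + ∑ j ∈ Finset.univ \ {k}, f j.castSucc := by
              rw [Finset.sum_eq_sum_sdiff_singleton_add (Finset.mem_univ k)
                (fun j : Fin n => f j.castSucc)]
              abel
            rw [hs]; abel

lemma code_ext (j₀ : Fin (n + 1)) {f f' : Fin (n + 1) → G}
    (h0 : defectAux n f = 0) (h0' : defectAux n f' = 0)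
    (hagree : ∀ t, t ≠ j₀ → f t = f' t) : f = f' := by
  have hf' : f' = Function.update f j₀ (f' j₀) := by
    funext t
    by_cases ht : t = j₀
    · subst ht; simp
    · rw [Function.update_of_ne ht]; exact (hagree t ht).symm
  rw [hf', defect_update, h0, zero_add] at h0'
  have hval : f j₀ = f' j₀ := by
    by_cases h : j₀ = Fin.last n
    · rw [if_pos h] at h0'; exact sub_eq_zero.mp h0'
    · rw [if_neg h] at h0'; exact (sub_eq_zero.mp h0').symm
  funext t
  by_cases ht : t = j₀
  · subst ht; exact hval
  · exact hagree t ht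

def completeAt (j₀ : Fin (n + 1)) (f : Fin (n + 1) → G) : Fin (n + 1) → G :=
  Function.update f j₀
    (f j₀ + (if j₀ = Fin.last n then defectAux n f else -defectAux n f))

lemma defect_completeAt (j₀ : Fin (n + 1)) (f : Fin (n + 1) → G) :
    defectAux n (completeAt j₀ f) = 0 := by
  rw [completeAt, defect_update]
  by_cases h : j₀ = Fin.last n <;> simp [h]

lemma completeAt_noteq {j₀ t : Fin (n + 1)} (h : t ≠ j₀) (f : Fin (n + 1) → G) :
    completeAt j₀ f t = f t := Function.update_of_ne h _ _

variable (G) in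
def sigmaMap (n : ℕ) (T : Finset (Fin (n + 1))) (t₀ j₀ : Fin (n + 1))
    (p : (↥(T.erase t₀) → Equiv.Perm G) ×
      (↥(Finset.univ \ insert j₀ T) → G → G)) (g : G) : Fin (n + 1) → G :=
  completeAt j₀ (fun t =>
    if h : t ∈ T.erase t₀ then p.1 ⟨t, h⟩ g
    else if h2 : t ∈ Finset.univ \ insert j₀ T then p.2 ⟨t, h2⟩ g
    else if t = t₀ then g else 0)

variable {q : ℕ} {T : Finset (Fin (n + 1))} {t₀ j₀ : Fin (n + 1)}
  {p : (↥(T.erase t₀) → Equiv.Perm G) × (↥(Finset.univ \ insert j₀ T) → G → G)}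
  {g : G}

lemma sigmaMap_defect : defectAux n (sigmaMap G n T t₀ j₀ p g) = 0 :=
  defect_completeAt _ _

lemma sigmaMap_t₀ (ht₀ : t₀ ∈ T) (hj₀ : j₀ ∉ T) :
    sigmaMap G n T t₀ j₀ p g t₀ = g := by
  have hne : t₀ ≠ j₀ := fun h => hj₀ (h ▸ ht₀)
  rw [sigmaMap, completeAt_noteq hne]
  have h1 : t₀ ∉ T.erase t₀ := Finset.notMem_erase t₀ T
  have h2 : t₀ ∉ Finset.univ \ insert j₀ T := by
    simp [Finset.mem_sdiff, Finset.mem_insert, ht₀]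
  rw [dif_neg h1, dif_neg h2, if_pos rfl]

lemma sigmaMap_erase {t : Fin (n + 1)} (ht : t ∈ T.erase t₀) (hj₀ : j₀ ∉ T) :
    sigmaMap G n T t₀ j₀ p g t = p.1 ⟨t, ht⟩ g := by
  have hne : t ≠ j₀ := fun h => hj₀ (h ▸ Finset.mem_of_mem_erase ht)
  rw [sigmaMap, completeAt_noteq hne, dif_pos ht]

lemma sigmaMap_free {t : Fin (n + 1)} (ht : t ∈ Finset.univ \ insert j₀ T) :
    sigmaMap G n T t₀ j₀ p g t = p.2 ⟨t, ht⟩ g := by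
  have hne : t ≠ j₀ := by
    intro h
    rw [Finset.mem_sdiff] at ht
    exact ht.2 (h ▸ Finset.mem_insert_self j₀ T)
  have h1 : t ∉ T.erase t₀ := by
    intro hc
    rw [Finset.mem_sdiff] at ht
    exact ht.2 (Finset.mem_insert_of_mem (Finset.mem_of_mem_erase hc))
  rw [sigmaMap, completeAt_noteq hne, dif_neg h1, dif_pos ht]

end aux

set_option maxHeartbeats 1000000 in
theorem stmt_5 (q n i : ℕ) (hq : 2 ≤ q) (G : Type*) [AddCommGroup G] [Fintype G]
    (hG : Fintype.card G = q) (T : Finset (Fin (n + 1))) (hT : T.card = i)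
    (hi1 : 1 ≤ i) (hin : i ≤ n) :
    {S : Finset (Fin (n + 1) → G) |
        ↑S ⊆ {f : Fin (n + 1) → G | f (Fin.last n) = ∑ j : Fin n, f j.castSucc} ∧
        S.card = q ∧ ∀ t ∈ T, Set.InjOn (fun c : Fin (n + 1) → G => c t) ↑S}.ncard
      = q.factorial ^ (i - 1) * q ^ (q * (n - i)) := by
  classical
  obtain ⟨t₀, ht₀⟩ := Finset.card_pos.mp (show 0 < T.card by omega)
  obtain ⟨j₀, hj₀⟩ : ∃ j : Fin (n + 1), j ∉ T := by
    by_contra hc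
    push_neg at hc
    have huniv : T = Finset.univ := Finset.eq_univ_iff_forall.mpr hc
    have : T.card = n + 1 := by rw [huniv, Finset.card_univ, Fintype.card_fin]
    omega
  have ht₀j₀ : t₀ ≠ j₀ := fun h => hj₀ (h ▸ ht₀)
  set Φ : ((↥(T.erase t₀) → Equiv.Perm G) ×
      (↥(Finset.univ \ insert j₀ T) → G → G)) → Finset (Fin (n + 1) → G) :=
    fun p => Finset.image (sigmaMap G n T t₀ j₀ p) Finset.univ with hΦ
  have hσinj : ∀ p, Function.Injective (sigmaMap G n T t₀ j₀ p) := by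
    intro p g g' h
    have := congrFun h t₀
    rwa [sigmaMap_t₀ ht₀ hj₀, sigmaMap_t₀ ht₀ hj₀] at this
  have hΦmem : ∀ p, Φ p ∈ {S : Finset (Fin (n + 1) → G) |
      ↑S ⊆ {f : Fin (n + 1) → G | f (Fin.last n) = ∑ j : Fin n, f j.castSucc} ∧
      S.card = q ∧ ∀ t ∈ T, Set.InjOn (fun c : Fin (n + 1) → G => c t) ↑S} := by
    intro p
    refine ⟨?_, ?_, ?_⟩
    · intro f hf
      rw [Finset.mem_coe, Finset.mem_image] at hf
      obtain ⟨g, -, rfl⟩ := hf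
      exact (mem_code_iff_defect _).mpr sigmaMap_defect
    · rw [Finset.card_image_of_injective _ (hσinj p), Finset.card_univ, hG]
    · intro t ht f hf f' hf' heq
      rw [Finset.mem_coe, Finset.mem_image] at hf hf'
      obtain ⟨g, -, rfl⟩ := hf
      obtain ⟨g', -, rfl⟩ := hf'
      suffices hgg : g = g' by rw [hgg]
      by_cases hte : t = t₀
      · subst hte
        simp only [sigmaMap_t₀ ht₀ hj₀] at heq
        exact heq
      · have hter : t ∈ T.erase t₀ := Finset.mem_erase.mpr ⟨hte, ht⟩
        simp only [sigmaMap_erase hter hj₀] at heq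
        exact (p.1 ⟨t, hter⟩).injective heq
  have hΦinj : Function.Injective Φ := by
    intro p p' h
    have hσ : ∀ g, sigmaMap G n T t₀ j₀ p g = sigmaMap G n T t₀ j₀ p' g := by
      intro g
      have hmem : sigmaMap G n T t₀ j₀ p g ∈ Φ p' := by
        rw [← h]
        exact Finset.mem_image_of_mem _ (Finset.mem_univ g)
      obtain ⟨g', -, hg'⟩ := Finset.mem_image.mp hmem
      have : g' = g := by
        have := congrFun hg' t₀
        rwa [sigmaMap_t₀ ht₀ hj₀, sigmaMap_t₀ ht₀ hj₀] at this
      rw [← hg', this]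
    refine Prod.ext ?_ ?_
    · funext x
      refine Equiv.ext fun g => ?_
      have h1 := sigmaMap_erase (p := p) (g := g) x.2 hj₀
      have h2 := sigmaMap_erase (p := p') (g := g) x.2 hj₀
      rw [hσ g, h2] at h1
      simpa using h1.symm
    · funext x g
      have h1 := sigmaMap_free (p := p) (g := g) (t₀ := t₀) x.2
      have h2 := sigmaMap_free (p := p') (g := g) (t₀ := t₀) x.2
      rw [hσ g, h2] at h1
      simpa using h1.symm
  have hΦsurj : ∀ S ∈ {S : Finset (Fin (n + 1) → G) |
      ↑S ⊆ {f : Fin (n + 1) → G | f (Fin.last n) = ∑ j : Fin n, f j.castSucc} ∧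
      S.card = q ∧ ∀ t ∈ T, Set.InjOn (fun c : Fin (n + 1) → G => c t) ↑S},
      ∃ p, Φ p = S := by
    rintro S ⟨hSC, hScard, hSinj⟩
    set e : ↥S → G := fun s => (s : Fin (n + 1) → G) t₀ with he
    have he_inj : Function.Injective e := by
      intro s s' hss
      exact Subtype.ext (hSinj t₀ ht₀ (Finset.mem_coe.mpr s.2)
        (Finset.mem_coe.mpr s'.2) hss)
    have he_bij : Function.Bijective e :=
      (Fintype.bijective_iff_injective_and_card e).mpr
        ⟨he_inj, by rw [Fintype.card_coe, hScard, hG]⟩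
    set ψ : G ≃ ↥S := (Equiv.ofBijective e he_bij).symm with hψdef
    have hψ : ∀ g : G, (↑(ψ g) : Fin (n + 1) → G) t₀ = g := fun g =>
      (Equiv.ofBijective e he_bij).apply_symm_apply g
    have hcolinj : ∀ t ∈ T, Function.Injective
        (fun g : G => (↑(ψ g) : Fin (n + 1) → G) t) := by
      intro t ht g g' hgg
      have : (↑(ψ g) : Fin (n + 1) → G) = ↑(ψ g') :=
        hSinj t ht (Finset.mem_coe.mpr (ψ g).2) (Finset.mem_coe.mpr (ψ g').2) hgg
      exact ψ.injective (Subtype.ext this)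
    set p : (↥(T.erase t₀) → Equiv.Perm G) ×
        (↥(Finset.univ \ insert j₀ T) → G → G) := ⟨fun x => Equiv.ofBijective
        (fun g : G => (↑(ψ g) : Fin (n + 1) → G) x)
        ((Finite.injective_iff_bijective).mp
          (hcolinj x (Finset.mem_of_mem_erase x.2))),
      fun x g => (↑(ψ g) : Fin (n + 1) → G) x⟩ with hp
    have hmain : ∀ g : G, sigmaMap G n T t₀ j₀ p g = ↑(ψ g) := by
      intro g
      refine code_ext j₀ sigmaMap_defect
        ((mem_code_iff_defect _).mp (hSC (Finset.mem_coe.mpr (ψ g).2))) ?_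
      intro t htj
      by_cases h1 : t ∈ T.erase t₀
      · rw [sigmaMap_erase h1 hj₀]
        simp [hp, Equiv.ofBijective]
      · by_cases h2 : t ∈ Finset.univ \ insert j₀ T
        · rw [sigmaMap_free h2]
        · have htT : t ∈ T := by
            rw [Finset.mem_sdiff] at h2
            push_neg at h2
            have := h2 (Finset.mem_univ t)
            rcases Finset.mem_insert.mp this with h | h
            · exact absurd h htj
            · exact h
          have : t = t₀ := by
            by_contra hc
            exact h1 (Finset.mem_erase.mpr ⟨hc, htT⟩)
          subst this
          rw [sigmaMap_t₀ ht₀ hj₀, hψ g]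
    refine ⟨p, ?_⟩
    ext f
    rw [hΦ, Finset.mem_image]
    constructor
    · rintro ⟨g, -, rfl⟩
      rw [hmain g]
      exact (ψ g).2
    · intro hf
      refine ⟨e ⟨f, hf⟩, Finset.mem_univ _, ?_⟩
      rw [hmain]
      have : ψ (e ⟨f, hf⟩) = ⟨f, hf⟩ :=
        (Equiv.ofBijective e he_bij).symm_apply_apply ⟨f, hf⟩
      rw [this]
  have hrange : {S : Finset (Fin (n + 1) → G) |
      ↑S ⊆ {f : Fin (n + 1) → G | f (Fin.last n) = ∑ j : Fin n, f j.castSucc} ∧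
      S.card = q ∧ ∀ t ∈ T, Set.InjOn (fun c : Fin (n + 1) → G => c t) ↑S}
      = Set.range Φ := by
    ext S
    constructor
    · intro h
      obtain ⟨p, hp⟩ := hΦsurj S h
      exact ⟨p, hp⟩
    · rintro ⟨p, rfl⟩
      exact hΦmem p
  rw [hrange, ← Nat.card_coe_set_eq, Nat.card_range_of_injective hΦinj,
    Nat.card_eq_fintype_card]
  have hFcard : (Finset.univ \ insert j₀ T).card = n - i := by
    rw [Finset.card_sdiff_of_subset (Finset.subset_univ _), Finset.card_univ,
      Fintype.card_fin, Finset.card_insert_of_notMem hj₀, hT]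
    omega
  rw [Fintype.card_prod, Fintype.card_fun, Fintype.card_fun,
    Fintype.card_perm, Fintype.card_fun, Fintype.card_coe, Fintype.card_coe,
    hG, Finset.card_erase_of_mem ht₀, hT, hFcard, ← pow_mul]
end

section
/- Let q ≥ 3 be odd and C = {(x, y, x+y, x−y) : x, y ∈ ℤ/qℤ} ⊆ (ℤ/qℤ)⁴. For every 3-element subset T of {1,2,3,4}, the number of q-element subsets of C that are separated at all three coordinates in T equals s_q / q!, where s_q is the number of pairs of bijections π₁, π₂ : Fin q → ℤ/qℤ with π₁ + π₂ a bijection. -/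
open Function Set

/-- multiplication by a unit is bijective -/
private lemma unit_mul_bij {q : ℕ} {a : ZMod q} (ha : IsUnit a) :
    Function.Bijective (fun x : ZMod q => a * x) := by
  obtain ⟨A, rfl⟩ := ha
  exact (Units.mulLeft A).bijective

/-- scaling lemma: counts of "complete-mapping-like" permutations agree for unit coefficients -/
private lemma scale_count {q : ℕ} {a b : ZMod q} (ha : IsUnit a) (hb : IsUnit b) :
    Nat.card {σ : ZMod q → ZMod q // Function.Bijective σ ∧
        Function.Bijective (fun u => a * u + b * σ u)}
      = Nat.card {σ : ZMod q → ZMod q // Function.Bijective σ ∧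
        Function.Bijective (fun u => u + σ u)} := by
  obtain ⟨A, rfl⟩ := ha
  obtain ⟨B, rfl⟩ := hb
  apply Nat.card_congr
  refine ⟨fun σ => ⟨fun u => (A⁻¹ : (ZMod q)ˣ) * ((B : ZMod q) * σ.1 u), ?_, ?_⟩,
          fun τ => ⟨fun u => (B⁻¹ : (ZMod q)ˣ) * ((A : ZMod q) * τ.1 u), ?_, ?_⟩, ?_, ?_⟩
  · exact (unit_mul_bij A⁻¹.isUnit).comp ((unit_mul_bij B.isUnit).comp σ.2.1)
  · have : (fun u => u + (A⁻¹ : (ZMod q)ˣ) * ((B : ZMod q) * σ.1 u))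
        = (fun x : ZMod q => (A⁻¹ : (ZMod q)ˣ) * x) ∘ (fun u => (A : ZMod q) * u + B * σ.1 u) := by
      funext u
      simp [mul_add, ← mul_assoc, Units.inv_mul]
    rw [this]
    exact (unit_mul_bij A⁻¹.isUnit).comp σ.2.2
  · exact (unit_mul_bij B⁻¹.isUnit).comp ((unit_mul_bij A.isUnit).comp τ.2.1)
  · have : (fun u => (A : ZMod q) * u + B * ((B⁻¹ : (ZMod q)ˣ) * ((A : ZMod q) * τ.1 u)))
        = (fun x : ZMod q => (A : ZMod q) * x) ∘ (fun u => u + τ.1 u) := by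
      funext u
      simp [mul_add, ← mul_assoc, Units.mul_inv]
    rw [this]
    exact (unit_mul_bij A.isUnit).comp τ.2.2
  · intro σ
    ext u
    simp [← mul_assoc]
  · intro τ
    ext u
    simp [← mul_assoc]

/-- the pair count equals q! times the permutation count -/
private lemma pair_count (q : ℕ) [NeZero q] :
    Nat.card {p : (Fin q → ZMod q) × (Fin q → ZMod q) // Function.Bijective p.1 ∧
        Function.Bijective p.2 ∧ Function.Bijective (fun i => p.1 i + p.2 i)}
      = q.factorial * Nat.card {σ : ZMod q → ZMod q // Function.Bijective σ ∧
          Function.Bijective (fun u => u + σ u)} := by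
  have key : {p : (Fin q → ZMod q) × (Fin q → ZMod q) // Function.Bijective p.1 ∧
        Function.Bijective p.2 ∧ Function.Bijective (fun i => p.1 i + p.2 i)}
      ≃ (Fin q ≃ ZMod q) × {σ : ZMod q → ZMod q // Function.Bijective σ ∧
          Function.Bijective (fun u => u + σ u)} := by
    refine ⟨fun p => ⟨Equiv.ofBijective p.1.1 p.2.1,
        ⟨p.1.2 ∘ (Equiv.ofBijective p.1.1 p.2.1).symm, ?_, ?_⟩⟩,
      fun x => ⟨(⇑x.1, x.2.1 ∘ ⇑x.1), x.1.bijective, x.2.2.1.comp x.1.bijective, ?_⟩, ?_, ?_⟩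
    · exact p.2.2.1.comp (Equiv.ofBijective p.1.1 p.2.1).symm.bijective
    · have : (fun u => u + (p.1.2 ∘ (Equiv.ofBijective p.1.1 p.2.1).symm) u)
          = (fun i => p.1.1 i + p.1.2 i) ∘ ⇑(Equiv.ofBijective p.1.1 p.2.1).symm := by
        funext u
        simp only [Function.comp_apply]
        congr 1
        exact ((Equiv.ofBijective p.1.1 p.2.1).apply_symm_apply u).symm
      rw [this]
      exact p.2.2.2.comp (Equiv.ofBijective p.1.1 p.2.1).symm.bijective
    · have : (fun i => x.1 i + (x.2.1 ∘ ⇑x.1) i) = (fun u => u + x.2.1 u) ∘ ⇑x.1 := rfl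
      rw [this]
      exact x.2.2.2.comp x.1.bijective
    · intro p
      apply Subtype.ext
      apply Prod.ext
      · rfl
      · funext i
        exact congrArg _ ((Equiv.ofBijective p.1.1 p.2.1).symm_apply_apply i)
    · intro x
      apply Prod.ext
      · apply Equiv.ext; intro i; rfl
      · apply Subtype.ext
        funext u
        exact congrArg _ ((Equiv.ofBijective (⇑x.1) x.1.bijective).apply_symm_apply u)
  rw [Nat.card_congr key, Nat.card_prod]
  congr 1
  rw [Nat.card_eq_fintype_card,
    Fintype.card_equiv (Fintype.equivOfCardEq (by simp [ZMod.card]))]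
  simp

/-- the main counting lemma: separated subsets correspond to complete-mapping-like permutations -/
private lemma main_count {q : ℕ} (hq3 : 3 ≤ q) (T : Finset (Fin 4)) (t1 t2 t3 : Fin 4)
    (ht1 : t1 ∈ T) (ht2 : t2 ∈ T) (ht3 : t3 ∈ T)
    (hTsub : ∀ t ∈ T, t = t1 ∨ t = t2 ∨ t = t3)
    (cw : ZMod q → ZMod q → (Fin 4 → ZMod q)) (a b : ZMod q)
    (h1 : ∀ u v, ∃ x y : ZMod q, cw u v = ![x, y, x + y, x - y])
    (h2 : ∀ u v, cw u v t1 = u)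
    (h3 : ∀ u v, cw u v t2 = v)
    (h4 : ∀ u v, cw u v t3 = a * u + b * v)
    (h5 : ∀ x y : ZMod q, cw (![x, y, x + y, x - y] t1) (![x, y, x + y, x - y] t2)
          = ![x, y, x + y, x - y]) :
    {S : Finset (Fin 4 → ZMod q) |
        ↑S ⊆ {f : Fin 4 → ZMod q | ∃ x y : ZMod q, f = ![x, y, x + y, x - y]} ∧
        S.card = q ∧ ∀ t ∈ T, Set.InjOn (fun c : Fin 4 → ZMod q => c t) ↑S}.ncard
      = Nat.card {σ : ZMod q → ZMod q // Function.Bijective σ ∧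
          Function.Bijective (fun u => a * u + b * σ u)} := by
  haveI : NeZero q := ⟨by omega⟩
  set C : Set (Fin 4 → ZMod q) := {f | ∃ x y : ZMod q, f = ![x, y, x + y, x - y]} with hC
  set CM : Set (ZMod q → ZMod q) :=
    {σ | Function.Bijective σ ∧ Function.Bijective (fun u => a * u + b * σ u)} with hCM
  set G : (ZMod q → ZMod q) → Finset (Fin 4 → ZMod q) :=
    fun σ => Finset.image (fun u => cw u (σ u)) Finset.univ with hG
  -- injectivity of u ↦ cw u (σ u)
  have hcwinj : ∀ σ : ZMod q → ZMod q, Function.Injective (fun u => cw u (σ u)) := by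
    intro σ u u' h
    have := congrArg (fun c : Fin 4 → ZMod q => c t1) h
    simpa [h2] using this
  have hGcard : ∀ σ, (G σ).card = q := by
    intro σ
    rw [hG]
    rw [Finset.card_image_of_injective _ (hcwinj σ)]
    simp [ZMod.card]
  have hGinj : Function.Injective G := by
    intro σ τ h
    funext u
    have hm : cw u (σ u) ∈ G τ := by
      rw [← h, hG]
      exact Finset.mem_image.mpr ⟨u, Finset.mem_univ u, rfl⟩
    obtain ⟨u', _, hu'⟩ := Finset.mem_image.mp hm
    have h1' : u' = u := by
      have := congrArg (fun c : Fin 4 → ZMod q => c t1) hu'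
      simpa [h2] using this
    have h2' : τ u' = σ u := by
      have := congrArg (fun c : Fin 4 → ZMod q => c t2) hu'
      simpa [h3] using this
    rw [← h2', h1']
  have hset : {S : Finset (Fin 4 → ZMod q) |
        ↑S ⊆ C ∧ S.card = q ∧ ∀ t ∈ T, Set.InjOn (fun c : Fin 4 → ZMod q => c t) ↑S}
      = G '' CM := by
    ext S
    constructor
    · rintro ⟨hsub, hcard, hinj⟩
      have hi1 := hinj t1 ht1
      have hi2 := hinj t2 ht2
      have hi3 := hinj t3 ht3
      -- every residue is attained at coordinate t1
      have himg : S.image (fun c => c t1) = Finset.univ := by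
        apply Finset.eq_univ_of_card
        rw [Finset.card_image_of_injOn hi1, hcard]
        simp [ZMod.card]
      have hx : ∀ u : ZMod q, ∃ c, c ∈ S ∧ (fun c : Fin 4 → ZMod q => c t1) c = u := by
        intro u
        have : u ∈ S.image (fun c => c t1) := by rw [himg]; exact Finset.mem_univ u
        exact Finset.mem_image.mp this
      choose f hfS hf1 using hx
      set σ : ZMod q → ZMod q := fun u => f u t2 with hσ
      have hcw : ∀ u, cw u (σ u) = f u := by
        intro u
        obtain ⟨x, y, hxy⟩ := hsub (hfS u)
        have h5' := h5 x y
        rw [← hxy] at h5'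
        have ht : f u t1 = u := hf1 u
        rw [ht] at h5'
        rw [hσ]
        exact h5'
      have hGS : G σ = S := by
        apply Finset.eq_of_subset_of_card_le
        · intro c hc
          obtain ⟨u, _, hu⟩ := Finset.mem_image.mp hc
          rw [← hu, hcw]
          exact hfS u
        · rw [hcard, hGcard]
      have hfmem : ∀ u, (f u : Fin 4 → ZMod q) ∈ (↑S : Set (Fin 4 → ZMod q)) := fun u => hfS u
      have hfinj : ∀ u u', f u = f u' → u = u' := by
        intro u u' h
        rw [← hf1 u, ← hf1 u', h]
      have hσbij : Function.Bijective σ := by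
        rw [Finite.injective_iff_bijective.symm] at *
        intro u u' h
        exact hfinj u u' (hi2 (hfmem u) (hfmem u') h)
      refine ⟨σ, ⟨hσbij, ?_⟩, hGS⟩
      · rw [← Finite.injective_iff_bijective]
        intro u u' h
        simp only at h
        rw [← h4, ← h4, hcw, hcw] at h
        exact hfinj u u' (hi3 (hfmem u) (hfmem u') h)
    · rintro ⟨σ, ⟨hσbij, habbij⟩, rfl⟩
      refine ⟨?_, hGcard σ, ?_⟩
      · intro c hc
        obtain ⟨u, _, hu⟩ := Finset.mem_image.mp hc
        rw [← hu]
        exact h1 u (σ u)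
      · intro t ht c hc c' hc' hcc
        obtain ⟨u, _, hu⟩ := Finset.mem_image.mp hc
        obtain ⟨u', _, hu'⟩ := Finset.mem_image.mp hc'
        simp only at hcc
        rw [← hu, ← hu'] at hcc ⊢
        have huu : u = u' := by
          rcases hTsub t ht with rfl | rfl | rfl
          · rwa [h2, h2] at hcc
          · rw [h3, h3] at hcc
            exact hσbij.1 hcc
          · rw [h4, h4] at hcc
            exact habbij.1 hcc
        rw [huu]
  rw [hset, Set.ncard_image_of_injective _ hGinj, ← Nat.card_coe_set_eq]
  rfl

theorem stmt_7 (q : ℕ) (hq : 3 ≤ q) (hodd : Odd q) (T : Finset (Fin 4)) (hT : T.card = 3) :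
    {S : Finset (Fin 4 → ZMod q) |
        ↑S ⊆ {f : Fin 4 → ZMod q | ∃ x y : ZMod q, f = ![x, y, x + y, x - y]} ∧
        S.card = q ∧ ∀ t ∈ T, Set.InjOn (fun c : Fin 4 → ZMod q => c t) ↑S}.ncard
      = {p : (Fin q → ZMod q) × (Fin q → ZMod q) | Function.Bijective p.1 ∧
          Function.Bijective p.2 ∧ Function.Bijective (fun i => p.1 i + p.2 i)}.ncard
        / q.factorial := by
  haveI : NeZero q := ⟨by omega⟩
  have hu1 : IsUnit (1 : ZMod q) := isUnit_one
  have hun1 : IsUnit (-1 : ZMod q) := isUnit_one.neg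
  have hu2 : IsUnit (2 : ZMod q) := by
    have : IsUnit ((2 : ℕ) : ZMod q) :=
      (ZMod.isUnit_iff_coprime 2 q).mpr (Nat.coprime_two_left.mpr hodd)
    simpa using this
  have hun2 : IsUnit (-2 : ZMod q) := hu2.neg
  have hrhs : {p : (Fin q → ZMod q) × (Fin q → ZMod q) | Function.Bijective p.1 ∧
          Function.Bijective p.2 ∧ Function.Bijective (fun i => p.1 i + p.2 i)}.ncard
      = q.factorial * Nat.card {σ : ZMod q → ZMod q // Function.Bijective σ ∧
          Function.Bijective (fun u => u + σ u)} := by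
    rw [← Nat.card_coe_set_eq]
    exact pair_count q
  rw [hrhs, Nat.mul_div_cancel_left _ q.factorial_pos]
  have hcases : T = {0, 1, 2} ∨ T = {0, 1, 3} ∨ T = {0, 2, 3} ∨ T = {1, 2, 3} := by
    revert hT; revert T; decide
  rcases hcases with rfl | rfl | rfl | rfl
  · rw [main_count hq _ 0 1 2 (by decide) (by decide) (by decide) (by decide)
      (fun u v => ![u, v, u + v, u - v]) 1 1
      (fun u v => ⟨u, v, rfl⟩)
      (fun u v => rfl) (fun u v => rfl)
      (fun u v => by simp)
      (fun x y => by simp)]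
    exact scale_count hu1 hu1
  · rw [main_count hq _ 0 1 3 (by decide) (by decide) (by decide) (by decide)
      (fun u v => ![u, v, u + v, u - v]) 1 (-1)
      (fun u v => ⟨u, v, rfl⟩)
      (fun u v => rfl) (fun u v => rfl)
      (fun u v => by simp; ring)
      (fun x y => by simp)]
    exact scale_count hu1 hun1
  · rw [main_count hq _ 0 2 3 (by decide) (by decide) (by decide) (by decide)
      (fun u v => ![u, v - u, v, 2 * u - v]) 2 (-1)
      (fun u v => ⟨u, v - u, by funext i; fin_cases i <;> simp <;> ring⟩)
      (fun u v => rfl) (fun u v => rfl)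
      (fun u v => by simp; ring)
      (fun x y => by funext i; fin_cases i <;> simp <;> ring)]
    exact scale_count hu2 hun1
  · rw [main_count hq _ 1 2 3 (by decide) (by decide) (by decide) (by decide)
      (fun u v => ![v - u, u, v, v - 2 * u]) (-2) 1
      (fun u v => ⟨v - u, u, by funext i; fin_cases i <;> simp <;> ring⟩)
      (fun u v => rfl) (fun u v => rfl)
      (fun u v => by simp; ring)
      (fun x y => by funext i; fin_cases i <;> simp <;> ring)]
    exact scale_count hun2 hu1
end

section
/- Let q ≥ 3 be odd and C = {(x, y, x+y, x−y) : x, y ∈ ℤ/qℤ}. Then the number of q-element subsets of C that are separated at some coordinate satisfies |S(C)| ≥ 4·q^q − 6·q! + 3·(s_q/q!). -/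
set_option linter.unusedSectionVars false
set_option linter.unnecessarySeqFocus false

open Function Set

namespace Stmt8Aux

variable {q : ℕ} [NeZero q]

/-- The curve `C`. -/
def Cset (q : ℕ) : Set (Fin 4 → ZMod q) := {f | ∃ x y : ZMod q, f = ![x, y, x + y, x - y]}

section Phi

variable (F : ZMod q → ZMod q → (Fin 4 → ZMod q))

/-- The q-subset of the curve determined by a function `g`, parameterization `F`. -/
def Phi (g : ZMod q → ZMod q) : Finset (Fin 4 → ZMod q) :=
  Finset.image (fun v => F v (g v)) Finset.univ

variable {F}

lemma mem_Phi {g x} : x ∈ Phi F g ↔ ∃ v, F v (g v) = x := by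
  simp [Phi]

lemma Phi_subset (hC : ∀ v w, F v w ∈ Cset q) (g) : ↑(Phi F g) ⊆ Cset q := by
  intro x hx
  rcases mem_Phi.1 hx with ⟨v, rfl⟩
  exact hC v (g v)

variable {t : Fin 4} (ht : ∀ v w, F v w t = v)

include ht

lemma Phi_card (g) : (Phi F g).card = q := by
  rw [Phi, Finset.card_image_of_injective _ (fun a b hab => by
    simpa [ht] using congrArg (fun f => f t) hab), Finset.card_univ, ZMod.card]

lemma Phi_injOn_iff (g) (t' : Fin 4) :
    Set.InjOn (fun c : Fin 4 → ZMod q => c t') ↑(Phi F g) ↔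
      Function.Injective (fun v => F v (g v) t') := by
  constructor
  · intro h a b hab
    have := h (by simp [Phi] : F a (g a) ∈ (Phi F g : Set (Fin 4 → ZMod q)))
      (by simp [Phi] : F b (g b) ∈ (Phi F g : Set (Fin 4 → ZMod q))) hab
    simpa [ht] using congrArg (fun f => f t) this
  · intro h a ha b hb hab
    rcases mem_Phi.1 (by exact_mod_cast ha) with ⟨v, rfl⟩
    rcases mem_Phi.1 (by exact_mod_cast hb) with ⟨v', rfl⟩
    have : v = v' := h hab
    rw [this]

lemma Phi_injOn (g) : Set.InjOn (fun c : Fin 4 → ZMod q => c t) ↑(Phi F g) :=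
  (Phi_injOn_iff ht g t).2 (fun a b hab => by simpa [ht] using hab)

lemma Phi_injective (hw : ∀ v w w', F v w = F v w' → w = w') :
    Function.Injective (Phi F) := by
  intro g g' h
  funext v
  have hmem : F v (g v) ∈ Phi F g' := by rw [← h]; simp [Phi]
  rcases mem_Phi.1 hmem with ⟨v', hv'⟩
  have hvv : v' = v := by simpa [ht] using congrArg (fun f => f t) hv'
  subst hvv
  exact hw v' _ _ hv'.symm

end Phi

/-! The four parameterizations. -/

def m0 (v w : ZMod q) : Fin 4 → ZMod q := ![v, w, v + w, v - w]
def m1 (v w : ZMod q) : Fin 4 → ZMod q := ![w, v, w + v, w - v]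
def m2 (v w : ZMod q) : Fin 4 → ZMod q := ![w, v - w, v, 2 * w - v]
def m3 (v w : ZMod q) : Fin 4 → ZMod q := ![w, w - v, 2 * w - v, v]

lemma m0_mem (v w : ZMod q) : m0 v w ∈ Cset q := ⟨v, w, rfl⟩
lemma m1_mem (v w : ZMod q) : m1 v w ∈ Cset q := ⟨w, v, rfl⟩
lemma m2_mem (v w : ZMod q) : m2 v w ∈ Cset q :=
  ⟨w, v - w, by funext i; fin_cases i <;> simp [m2] <;> ring⟩
lemma m3_mem (v w : ZMod q) : m3 v w ∈ Cset q :=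
  ⟨w, w - v, by funext i; fin_cases i <;> simp [m3] <;> ring⟩

lemma m0_coord (v w : ZMod q) : m0 v w 0 = v := rfl
lemma m1_coord (v w : ZMod q) : m1 v w 1 = v := rfl
lemma m2_coord (v w : ZMod q) : m2 v w 2 = v := rfl
lemma m3_coord (v w : ZMod q) : m3 v w 3 = v := rfl

lemma m0_w (v w w' : ZMod q) (h : m0 v w = m0 v w') : w = w' := by
  simpa [m0] using congrArg (fun f => f 1) h
lemma m1_w (v w w' : ZMod q) (h : m1 v w = m1 v w') : w = w' := by
  simpa [m1] using congrArg (fun f => f 0) h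
lemma m2_w (v w w' : ZMod q) (h : m2 v w = m2 v w') : w = w' := by
  simpa [m2] using congrArg (fun f => f 0) h
lemma m3_w (v w w' : ZMod q) (h : m3 v w = m3 v w') : w = w' := by
  simpa [m3] using congrArg (fun f => f 0) h

section Counting

variable {q : ℕ} [NeZero q]

lemma ncard_bij_fin :
    {p : Fin q → ZMod q | Function.Bijective p}.ncard = q.factorial := by
  have e1 : ({p : Fin q → ZMod q | Function.Bijective p} : Set _) ≃ (Fin q ≃ ZMod q) :=
    { toFun := fun p => Equiv.ofBijective p.1 p.2
      invFun := fun e => ⟨e, e.bijective⟩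
      left_inv := fun p => Subtype.ext rfl
      right_inv := fun e => Equiv.ext fun _ => rfl }
  rw [← Nat.card_coe_set_eq, Nat.card_congr e1, Nat.card_eq_fintype_card,
    Fintype.card_equiv (Fintype.equivOfCardEq (by simp [ZMod.card])),
    Fintype.card_fin]

lemma ncard_inj_fun :
    {g : ZMod q → ZMod q | Function.Injective g}.ncard = q.factorial := by
  have e1 : ({g : ZMod q → ZMod q | Function.Injective g} : Set _) ≃ Equiv.Perm (ZMod q) :=
    { toFun := fun p => Equiv.ofBijective p.1 (Finite.injective_iff_bijective.1 p.2)
      invFun := fun e => ⟨e, e.injective⟩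
      left_inv := fun p => Subtype.ext rfl
      right_inv := fun e => Equiv.ext fun _ => rfl }
  rw [← Nat.card_coe_set_eq, Nat.card_congr e1, Nat.card_eq_fintype_card,
    Fintype.card_perm, ZMod.card]

lemma ncard_univ_fun : (Set.univ : Set (ZMod q → ZMod q)).ncard = q ^ q := by
  rw [Set.ncard_univ, Nat.card_eq_fintype_card, Fintype.card_fun, ZMod.card]

lemma ncard_congr_equiv {α : Type*} (e : α ≃ α) {s t : Set α}
    (h : ∀ x, x ∈ s ↔ e x ∈ t) : s.ncard = t.ncard := by
  have himg : t = e '' s := by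
    ext x
    constructor
    · intro hx
      exact ⟨e.symm x, (h _).2 (by simpa using hx), by simp⟩
    · rintro ⟨y, hy, rfl⟩
      exact (h y).1 hy
  rw [himg, Set.ncard_image_of_injective _ e.injective]

lemma inj_neg_iff {f : ZMod q → ZMod q} :
    Function.Injective (fun v => - f v) ↔ Function.Injective f := by
  rw [show (fun v => - f v) = (fun x : ZMod q => -x) ∘ f from rfl,
    Function.Injective.of_comp_iff neg_injective]

lemma inj_unit_mul_iff {c : ZMod q} (hc : IsUnit c) {f : ZMod q → ZMod q} :
    Function.Injective (fun v => c * f v) ↔ Function.Injective f := by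
  rw [show (fun v => c * f v) = (c * ·) ∘ f from rfl,
    Function.Injective.of_comp_iff hc.mul_right_injective]

def myNeg : (ZMod q → ZMod q) ≃ (ZMod q → ZMod q) :=
  { toFun := fun g v => - g v
    invFun := fun g v => - g v
    left_inv := fun g => by funext v; simp
    right_inv := fun g => by funext v; simp }

lemma ncard_P1 :
    {g : ZMod q → ZMod q | Function.Injective g ∧ Function.Injective fun v => v - g v}.ncard =
    {g : ZMod q → ZMod q | Function.Injective g ∧ Function.Injective fun v => v + g v}.ncard := by
  refine ncard_congr_equiv myNeg fun g => ?_
  simp only [Set.mem_setOf_eq, myNeg, Equiv.coe_fn_mk]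
  refine and_congr inj_neg_iff.symm ?_
  rw [show (fun v => v + -g v) = fun v : ZMod q => v - g v from funext fun v => by ring]

lemma ncard_P2 :
    {g : ZMod q → ZMod q | Function.Injective g ∧ Function.Injective fun v => g v - v}.ncard =
    {g : ZMod q → ZMod q | Function.Injective g ∧ Function.Injective fun v => v + g v}.ncard := by
  refine (ncard_congr_equiv myNeg fun g => ?_).symm
  simp only [Set.mem_setOf_eq, myNeg, Equiv.coe_fn_mk]
  refine and_congr inj_neg_iff.symm ?_
  rw [show (fun v => -g v - v) = fun v : ZMod q => -(v + g v) from funext fun v => by ring,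
    inj_neg_iff]

lemma ncard_P3 (hu : IsUnit (2 : ZMod q)) :
    {g : ZMod q → ZMod q | Function.Injective g ∧
      Function.Injective fun v => 2 * g v - v}.ncard =
    {g : ZMod q → ZMod q | Function.Injective g ∧ Function.Injective fun v => v + g v}.ncard := by
  have hu' : IsUnit ((2 : ZMod q)⁻¹) :=
    IsUnit.of_mul_eq_one 2 (ZMod.inv_mul_of_unit 2 hu)
  have hcan : ∀ x : ZMod q, 2 * ((2 : ZMod q)⁻¹ * x) = x := fun x => by
    rw [← mul_assoc, ZMod.mul_inv_of_unit 2 hu, one_mul]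
  have hcan' : ∀ x : ZMod q, (2 : ZMod q)⁻¹ * (2 * x) = x := fun x => by
    rw [← mul_assoc, ZMod.inv_mul_of_unit 2 hu, one_mul]
  rw [← ncard_P2]
  refine (ncard_congr_equiv ?_ fun g => ?_).symm
  · exact
    { toFun := fun g v => (2 : ZMod q)⁻¹ * g v
      invFun := fun g v => 2 * g v
      left_inv := fun g => funext fun v => hcan (g v)
      right_inv := fun g => funext fun v => hcan' (g v) }
  · simp only [Set.mem_setOf_eq, Equiv.coe_fn_mk]
    refine and_congr (inj_unit_mul_iff hu').symm ?_
    rw [show (fun v => 2 * ((2 : ZMod q)⁻¹ * g v) - v) = fun v => g v - v from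
      funext fun v => by rw [hcan]]

lemma sq_eq :
    {p : (Fin q → ZMod q) × (Fin q → ZMod q) | Function.Bijective p.1 ∧
        Function.Bijective p.2 ∧
        Function.Bijective (fun i => p.1 i + p.2 i)}.ncard =
      q.factorial *
        {g : ZMod q → ZMod q | Function.Injective g ∧
          Function.Injective fun v => v + g v}.ncard := by
  classical
  set S1 : Set (Fin q → ZMod q) := {p | Function.Bijective p} with hS1
  set S2 : Set (ZMod q → ZMod q) :=
    {g | Function.Injective g ∧ Function.Injective fun v => v + g v} with hS2
  have himg : {p : (Fin q → ZMod q) × (Fin q → ZMod q) | Function.Bijective p.1 ∧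
      Function.Bijective p.2 ∧ Function.Bijective (fun i => p.1 i + p.2 i)} =
      (fun z : (Fin q → ZMod q) × (ZMod q → ZMod q) => (z.1, z.2 ∘ z.1)) '' (S1 ×ˢ S2) := by
    ext ⟨p1, p2⟩
    simp only [Set.mem_image, Set.mem_prod, Set.mem_setOf_eq, Prod.mk.injEq, Prod.exists,
      hS1, hS2]
    constructor
    · rintro ⟨h1, h2, h3⟩
      have e := Equiv.ofBijective p1 h1
      refine ⟨p1, p2 ∘ ⇑(Equiv.ofBijective p1 h1).symm, ⟨h1, ?_, ?_⟩, rfl, ?_⟩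
      · exact h2.injective.comp (Equiv.ofBijective p1 h1).symm.injective
      · have hfe : (fun v => v + (p2 ∘ ⇑(Equiv.ofBijective p1 h1).symm) v) =
            (fun i => p1 i + p2 i) ∘ ⇑(Equiv.ofBijective p1 h1).symm := by
          funext v
          show v + p2 _ = p1 ((Equiv.ofBijective p1 h1).symm v) + p2 _
          rw [show p1 ((Equiv.ofBijective p1 h1).symm v) =
            (Equiv.ofBijective p1 h1) ((Equiv.ofBijective p1 h1).symm v) from rfl,
            Equiv.apply_symm_apply]
        rw [hfe]
        exact h3.injective.comp (Equiv.ofBijective p1 h1).symm.injective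
      · funext i
        show p2 ((Equiv.ofBijective p1 h1).symm (p1 i)) = p2 i
        rw [show p1 i = (Equiv.ofBijective p1 h1) i from rfl, Equiv.symm_apply_apply]
    · rintro ⟨p, g, ⟨h1, hg1, hg2⟩, rfl, rfl⟩
      refine ⟨h1, ?_, ?_⟩
      · exact (Finite.injective_iff_bijective.1 hg1).comp h1
      · rw [show (fun i => p i + (g ∘ p) i) = (fun v => v + g v) ∘ p from rfl]
        exact (Finite.injective_iff_bijective.1 hg2).comp h1
  have hinj : Set.InjOn (fun z : (Fin q → ZMod q) × (ZMod q → ZMod q) => (z.1, z.2 ∘ z.1))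
      (S1 ×ˢ S2) := by
    rintro ⟨p, g⟩ hpg ⟨p', g'⟩ hpg' h
    obtain ⟨h1, h2⟩ := Prod.mk.injEq .. ▸ h
    subst h1
    refine Prod.ext rfl ?_
    funext v
    obtain ⟨i, rfl⟩ := hpg.1.2 v
    exact congrFun h2 i
  rw [himg, Set.ncard_image_of_injOn hinj]
  have hprod : (S1 ×ˢ S2).ncard = S1.ncard * S2.ncard := by
    rw [← Nat.card_coe_set_eq, ← Nat.card_coe_set_eq, ← Nat.card_coe_set_eq,
      ← Nat.card_prod]
    exact Nat.card_congr (Equiv.Set.prod S1 S2)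
  rw [hprod, hS1, ncard_bij_fin]

end Counting

end Stmt8Aux

open Stmt8Aux in
theorem stmt_8 (q : ℕ) (hq : 3 ≤ q) (hodd : Odd q) :
    (({S : Finset (Fin 4 → ZMod q) |
        ↑S ⊆ {f : Fin 4 → ZMod q | ∃ x y : ZMod q, f = ![x, y, x + y, x - y]} ∧
        S.card = q ∧ ∃ t : Fin 4, Set.InjOn (fun c : Fin 4 → ZMod q => c t) ↑S}.ncard : ℚ))
      ≥ 4 * (q : ℚ) ^ q - 6 * q.factorial +
        3 * (({p : (Fin q → ZMod q) × (Fin q → ZMod q) | Function.Bijective p.1 ∧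
            Function.Bijective p.2 ∧
            Function.Bijective (fun i => p.1 i + p.2 i)}.ncard : ℚ) / q.factorial) := by
  classical
  haveI : NeZero q := ⟨by omega⟩
  have hu : IsUnit (2 : ZMod q) := by
    have h2 : ((2 : ℕ) : ZMod q) = 2 := by norm_cast
    rw [← h2, ZMod.isUnit_iff_coprime]
    exact Nat.coprime_two_left.2 hodd
  have hcan : ∀ x : ZMod q, 2 * ((2 : ZMod q)⁻¹ * x) = x := fun x => by
    rw [← mul_assoc, ZMod.mul_inv_of_unit 2 hu, one_mul]
  have hcan' : ∀ x : ZMod q, (2 : ZMod q)⁻¹ * (2 * x) = x := fun x => by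
    rw [← mul_assoc, ZMod.inv_mul_of_unit 2 hu, one_mul]
  -- the ambient target set
  set T : Set (Finset (Fin 4 → ZMod q)) :=
    {S : Finset (Fin 4 → ZMod q) |
      ↑S ⊆ {f : Fin 4 → ZMod q | ∃ x y : ZMod q, f = ![x, y, x + y, x - y]} ∧
      S.card = q ∧ ∃ t : Fin 4, Set.InjOn (fun c : Fin 4 → ZMod q => c t) ↑S} with hT
  -- sets of parameter functions
  set X0 : Set (ZMod q → ZMod q) := {g | Function.Injective g} with hX0
  set Y2 : Set (ZMod q → ZMod q) := {g | Function.Injective fun v => v - g v} with hY2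
  set Y3 : Set (ZMod q → ZMod q) := {g | Function.Injective fun v => g v - v} with hY3
  set Z3 : Set (ZMod q → ZMod q) := {g | Function.Injective fun v => 2 * g v - v} with hZ3
  set Nn : ℕ := {g : ZMod q → ZMod q | Function.Injective g ∧
    Function.Injective fun v => v + g v}.ncard with hNn
  -- the four disjoint pieces
  set D0 : Set (Finset (Fin 4 → ZMod q)) := Phi m0 '' Set.univ with hD0def
  set D1 : Set (Finset (Fin 4 → ZMod q)) := Phi m1 '' X0ᶜ with hD1def
  set D2 : Set (Finset (Fin 4 → ZMod q)) := Phi m2 '' (X0 ∪ Y2)ᶜ with hD2def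
  set D3 : Set (Finset (Fin 4 → ZMod q)) := Phi m3 '' ((X0 ∪ Y3) ∪ Z3)ᶜ with hD3def
  -- membership properties
  have hD0A : ∀ x ∈ D0, Set.InjOn (fun c : Fin 4 → ZMod q => c 0) ↑x := by
    rintro x ⟨g, -, rfl⟩; exact Phi_injOn m0_coord g
  have hD1A : ∀ x ∈ D1, Set.InjOn (fun c : Fin 4 → ZMod q => c 1) ↑x := by
    rintro x ⟨g, -, rfl⟩; exact Phi_injOn m1_coord g
  have hD2A : ∀ x ∈ D2, Set.InjOn (fun c : Fin 4 → ZMod q => c 2) ↑x := by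
    rintro x ⟨g, -, rfl⟩; exact Phi_injOn m2_coord g
  have hD3A : ∀ x ∈ D3, Set.InjOn (fun c : Fin 4 → ZMod q => c 3) ↑x := by
    rintro x ⟨g, -, rfl⟩; exact Phi_injOn m3_coord g
  have hD1n0 : ∀ x ∈ D1, ¬ Set.InjOn (fun c : Fin 4 → ZMod q => c 0) ↑x := by
    rintro x ⟨g, hg, rfl⟩ h
    exact hg ((Phi_injOn_iff m1_coord g 0).1 h)
  have hD2n0 : ∀ x ∈ D2, ¬ Set.InjOn (fun c : Fin 4 → ZMod q => c 0) ↑x := by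
    rintro x ⟨g, hg, rfl⟩ h
    exact hg (Set.mem_union_left _ ((Phi_injOn_iff m2_coord g 0).1 h))
  have hD2n1 : ∀ x ∈ D2, ¬ Set.InjOn (fun c : Fin 4 → ZMod q => c 1) ↑x := by
    rintro x ⟨g, hg, rfl⟩ h
    exact hg (Set.mem_union_right _ ((Phi_injOn_iff m2_coord g 1).1 h))
  have hD3n0 : ∀ x ∈ D3, ¬ Set.InjOn (fun c : Fin 4 → ZMod q => c 0) ↑x := by
    rintro x ⟨g, hg, rfl⟩ h
    exact hg (Set.mem_union_left _ (Set.mem_union_left _ ((Phi_injOn_iff m3_coord g 0).1 h)))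
  have hD3n1 : ∀ x ∈ D3, ¬ Set.InjOn (fun c : Fin 4 → ZMod q => c 1) ↑x := by
    rintro x ⟨g, hg, rfl⟩ h
    exact hg (Set.mem_union_left _ (Set.mem_union_right _ ((Phi_injOn_iff m3_coord g 1).1 h)))
  have hD3n2 : ∀ x ∈ D3, ¬ Set.InjOn (fun c : Fin 4 → ZMod q => c 2) ↑x := by
    rintro x ⟨g, hg, rfl⟩ h
    exact hg (Set.mem_union_right _ ((Phi_injOn_iff m3_coord g 2).1 h))
  -- subsets of T
  have hsub : D0 ∪ (D1 ∪ (D2 ∪ D3)) ⊆ T := by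
    rintro x (⟨g, -, rfl⟩ | (⟨g, -, rfl⟩ | (⟨g, -, rfl⟩ | ⟨g, -, rfl⟩)))
    · exact ⟨Phi_subset m0_mem g, Phi_card m0_coord g, 0, Phi_injOn m0_coord g⟩
    · exact ⟨Phi_subset m1_mem g, Phi_card m1_coord g, 1, Phi_injOn m1_coord g⟩
    · exact ⟨Phi_subset m2_mem g, Phi_card m2_coord g, 2, Phi_injOn m2_coord g⟩
    · exact ⟨Phi_subset m3_mem g, Phi_card m3_coord g, 3, Phi_injOn m3_coord g⟩
  -- disjointness
  have d01 : Disjoint D0 D1 := Set.disjoint_left.2 fun x h0 h1 => hD1n0 x h1 (hD0A x h0)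
  have d02 : Disjoint D0 D2 := Set.disjoint_left.2 fun x h0 h1 => hD2n0 x h1 (hD0A x h0)
  have d03 : Disjoint D0 D3 := Set.disjoint_left.2 fun x h0 h1 => hD3n0 x h1 (hD0A x h0)
  have d12 : Disjoint D1 D2 := Set.disjoint_left.2 fun x h0 h1 => hD2n1 x h1 (hD1A x h0)
  have d13 : Disjoint D1 D3 := Set.disjoint_left.2 fun x h0 h1 => hD3n1 x h1 (hD1A x h0)
  have d23 : Disjoint D2 D3 := Set.disjoint_left.2 fun x h0 h1 => hD3n2 x h1 (hD2A x h0)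
  -- cardinality of the union
  have hW : (D0 ∪ (D1 ∪ (D2 ∪ D3))).ncard = D0.ncard + (D1.ncard + (D2.ncard + D3.ncard)) := by
    rw [Set.ncard_union_eq (by
        exact Set.disjoint_union_right.2 ⟨d01, Set.disjoint_union_right.2 ⟨d02, d03⟩⟩)
      (Set.toFinite _) (Set.toFinite _),
      Set.ncard_union_eq (Set.disjoint_union_right.2 ⟨d12, d13⟩)
      (Set.toFinite _) (Set.toFinite _),
      Set.ncard_union_eq d23 (Set.toFinite _) (Set.toFinite _)]
  have hTW : (D0 ∪ (D1 ∪ (D2 ∪ D3))).ncard ≤ T.ncard :=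
    Set.ncard_le_ncard hsub (Set.toFinite _)
  -- cardinalities of the pieces
  have hc0 : D0.ncard = q ^ q := by
    rw [hD0def, Set.ncard_image_of_injective _ (Phi_injective m0_coord m0_w), ncard_univ_fun]
  have hX0card : X0.ncard = q.factorial := ncard_inj_fun
  have hY2card : Y2.ncard = q.factorial := by
    refine Eq.trans (ncard_congr_equiv ⟨fun g v => v - g v, fun g v => v - g v,
      fun g => funext fun v => by ring, fun g => funext fun v => by ring⟩
      (fun g => Iff.rfl)) ncard_inj_fun
  have hY3card : Y3.ncard = q.factorial := by
    refine Eq.trans (ncard_congr_equiv ⟨fun g v => g v - v, fun g v => g v + v,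
      fun g => funext fun v => by ring, fun g => funext fun v => by ring⟩
      (fun g => Iff.rfl)) ncard_inj_fun
  have hZ3card : Z3.ncard = q.factorial := by
    refine Eq.trans (ncard_congr_equiv ⟨fun g v => 2 * g v - v,
      fun g v => (2 : ZMod q)⁻¹ * (g v + v),
      fun g => funext fun v => by
        show (2 : ZMod q)⁻¹ * (2 * g v - v + v) = g v
        rw [show 2 * g v - v + v = 2 * g v from by ring, hcan'],
      fun g => funext fun v => by
        show 2 * ((2 : ZMod q)⁻¹ * (g v + v)) - v = g v
        rw [hcan]; ring⟩
      (fun g => Iff.rfl)) ncard_inj_fun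
  have hXY2 : (X0 ∩ Y2).ncard = Nn := by
    have : X0 ∩ Y2 = {g : ZMod q → ZMod q | Function.Injective g ∧
        Function.Injective fun v => v - g v} := rfl
    rw [this, ncard_P1]
  have hXY3 : (X0 ∩ Y3).ncard = Nn := by
    have : X0 ∩ Y3 = {g : ZMod q → ZMod q | Function.Injective g ∧
        Function.Injective fun v => g v - v} := rfl
    rw [this, ncard_P2]
  have hXZ3 : (X0 ∩ Z3).ncard = Nn := by
    have : X0 ∩ Z3 = {g : ZMod q → ZMod q | Function.Injective g ∧
        Function.Injective fun v => 2 * g v - v} := rfl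
    rw [this, ncard_P3 hu]
  have hc1 : D1.ncard + q.factorial = q ^ q := by
    rw [hD1def, Set.ncard_image_of_injective _ (Phi_injective m1_coord m1_w)]
    have := Set.ncard_add_ncard_compl X0 (Set.toFinite _) (Set.toFinite _)
    rw [hX0card] at this
    have h5 : Nat.card (ZMod q → ZMod q) = q ^ q := by
      rw [← Set.ncard_univ, ncard_univ_fun]
    rw [← h5]
    linarith
  have hc2 : D2.ncard + 2 * q.factorial = q ^ q + Nn := by
    rw [hD2def, Set.ncard_image_of_injective _ (Phi_injective m2_coord m2_w)]
    have h1 := Set.ncard_add_ncard_compl (X0 ∪ Y2) (Set.toFinite _) (Set.toFinite _)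
    have h2 := Set.ncard_union_add_ncard_inter X0 Y2 (Set.toFinite _) (Set.toFinite _)
    rw [hX0card, hY2card, hXY2] at h2
    have h5 : Nat.card (ZMod q → ZMod q) = q ^ q := by
      rw [← Set.ncard_univ, ncard_univ_fun]
    rw [← h5]
    linarith
  have hc3 : D3.ncard + 3 * q.factorial ≥ q ^ q + 2 * Nn := by
    rw [hD3def, Set.ncard_image_of_injective _ (Phi_injective m3_coord m3_w)]
    have h1 := Set.ncard_add_ncard_compl ((X0 ∪ Y3) ∪ Z3) (Set.toFinite _) (Set.toFinite _)
    have h2 := Set.ncard_union_add_ncard_inter X0 Y3 (Set.toFinite _) (Set.toFinite _)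
    have h3 := Set.ncard_union_add_ncard_inter (X0 ∪ Y3) Z3 (Set.toFinite _) (Set.toFinite _)
    have h4 : (X0 ∩ Z3).ncard ≤ ((X0 ∪ Y3) ∩ Z3).ncard :=
      Set.ncard_le_ncard (Set.inter_subset_inter_left _ Set.subset_union_left)
        (Set.toFinite _)
    rw [hX0card, hY3card, hXY3] at h2
    rw [hZ3card] at h3
    rw [hXZ3] at h4
    have h5 : Nat.card (ZMod q → ZMod q) = q ^ q := by
      rw [← Set.ncard_univ, ncard_univ_fun]
    rw [← h5]
    linarith
  -- the pair count
  have hsq : ({p : (Fin q → ZMod q) × (Fin q → ZMod q) | Function.Bijective p.1 ∧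
      Function.Bijective p.2 ∧
      Function.Bijective (fun i => p.1 i + p.2 i)}.ncard) = q.factorial * Nn := sq_eq
  rw [hsq]
  have hfac : (q.factorial : ℚ) ≠ 0 := by
    exact_mod_cast Nat.factorial_ne_zero q
  have hdiv : ((q.factorial * Nn : ℕ) : ℚ) / (q.factorial : ℚ) = (Nn : ℚ) := by
    push_cast
    field_simp
  rw [hdiv]
  have hge : (T.ncard : ℚ) ≥ (q : ℚ) ^ q + (((q:ℚ) ^ q - q.factorial) +
      (((q:ℚ) ^ q + Nn - 2 * q.factorial) + ((q:ℚ) ^ q + 2 * Nn - 3 * q.factorial))) := by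
    have := hW ▸ hTW
    have hc0' := hc0
    have e0 : (D0.ncard : ℚ) = (q : ℚ) ^ q := by exact_mod_cast congrArg (Nat.cast (R := ℚ)) hc0
    have e1 : (D1.ncard : ℚ) + q.factorial = (q : ℚ) ^ q := by exact_mod_cast hc1
    have e2 : (D2.ncard : ℚ) + 2 * q.factorial = (q : ℚ) ^ q + Nn := by exact_mod_cast hc2
    have e3 : (D3.ncard : ℚ) + 3 * q.factorial ≥ (q : ℚ) ^ q + 2 * Nn := by exact_mod_cast hc3
    have eT : (T.ncard : ℚ) ≥ (D0.ncard : ℚ) + (D1.ncard + (D2.ncard + D3.ncard)) := by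
      exact_mod_cast hW ▸ hTW
    linarith
  linarith
end

section
/- Let q be a prime. Let C₁ = {c_j : j ∈ ℤ/qℤ} with c_j = (j, j+1, …, j+q−1) ∈ (ℤ/qℤ)^q, and C₂ = {i·𝟙 : i ∈ ℤ/qℤ} the set of constant vectors of length q. Set C = C₁ ∪ C₂, a code of size 2q. Then the number of q-element subsets of C that are separated at some coordinate equals 2^q·q − 2(q − 1). -/
namespace Stmt12Aux

set_option linter.unusedSectionVars false

variable (q : ℕ)

def A (j : ZMod q) : Fin q → ZMod q := fun t => j + ((t : ℕ) : ZMod q)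
def B (i : ZMod q) : Fin q → ZMod q := fun _ => i
def τ (t : Fin q) : ZMod q := ((t : ℕ) : ZMod q)

variable [Fact q.Prime]

lemma qpos : 0 < q := (Fact.out : q.Prime).pos

instance : NeZero q := ⟨(Fact.out : q.Prime).ne_zero⟩

lemma tau_inj : Function.Injective (τ q) := by
  intro a b h
  have := congrArg ZMod.val h
  rwa [τ, τ, ZMod.val_cast_of_lt a.isLt, ZMod.val_cast_of_lt b.isLt, ← Fin.ext_iff] at this

lemma A_inj : Function.Injective (A q) := by
  intro a b h
  have := congrArg (fun v => v ⟨0, qpos q⟩) h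
  simpa [A] using this

lemma B_inj : Function.Injective (B q) := by
  intro a b h
  exact congrArg (fun v => v ⟨0, qpos q⟩) h

lemma A_ne_B (j i : ZMod q) : A q j ≠ B q i := by
  haveI : Fact (1 < q) := ⟨(Fact.out : q.Prime).one_lt⟩
  intro h
  have h0 := congrArg (fun v => v ⟨0, qpos q⟩) h
  have h1 := congrArg (fun v => v ⟨1, (Fact.out : 1 < q)⟩) h
  simp [A, B] at h0 h1
  subst h0
  have h2 : (1 : ZMod q) + j = 0 + j := by
    rw [add_comm] at h1; simpa using h1
  exact one_ne_zero (add_right_cancel h2)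

def g (t : Fin q) (f : ZMod q → Bool) (r : ZMod q) : Fin q → ZMod q :=
  if f r then A q (r - τ q t) else B q r

lemma g_coord (t : Fin q) (f : ZMod q → Bool) (r : ZMod q) : g q t f r t = r := by
  unfold g; split <;> simp [A, B, τ]

def Ft (t : Fin q) : Finset (Finset (Fin q → ZMod q)) :=
  Finset.univ.image (fun f : ZMod q → Bool => Finset.univ.image (g q t f))

lemma mem_g_A (t : Fin q) (f : ZMod q → Bool) (j : ZMod q) :
    A q j ∈ Finset.univ.image (g q t f) ↔ f (j + τ q t) = true := by
  constructor
  · rintro h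
    obtain ⟨r, -, hr⟩ := Finset.mem_image.1 h
    unfold g at hr
    split at hr
    · have h2 : r - τ q t = j := A_inj q hr
      have h3 : r = j + τ q t := by rw [← h2]; ring
      rw [← h3]; assumption
    · exact absurd hr.symm (A_ne_B q j _)
  · intro hf
    refine Finset.mem_image.2 ⟨j + τ q t, Finset.mem_univ _, ?_⟩
    unfold g; rw [hf]; simp

lemma mem_g_B (t : Fin q) (f : ZMod q → Bool) (i : ZMod q) :
    B q i ∈ Finset.univ.image (g q t f) ↔ f i = false := by
  constructor
  · rintro h
    obtain ⟨r, -, hr⟩ := Finset.mem_image.1 h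
    unfold g at hr
    split at hr
    · exact absurd hr (A_ne_B q _ _)
    · have h2 : r = i := B_inj q hr
      rw [← h2]; exact Bool.eq_false_iff.2 ‹_›
  · intro hf
    refine Finset.mem_image.2 ⟨i, Finset.mem_univ _, ?_⟩
    simp [g, hf]

lemma g_image_inj (t : Fin q) : Function.Injective
    (fun f : ZMod q → Bool => Finset.univ.image (g q t f)) := by
  intro f f' h
  simp only at h
  funext i
  have h1 := mem_g_B q t f i
  have h2 := mem_g_B q t f' i
  rw [← h] at h2
  cases hf : f i <;> cases hf' : f' i <;> simp_all

lemma card_Ft (t : Fin q) : (Ft q t).card = 2 ^ q := by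
  rw [Ft, Finset.card_image_of_injective _ (g_image_inj q t)]
  simp [ZMod.card]

end Stmt12Aux
namespace Stmt12Aux
set_option linter.unusedSectionVars false
variable (q : ℕ) [Fact q.Prime]

lemma g_inj (t : Fin q) (f : ZMod q → Bool) : Function.Injective (g q t f) := by
  intro r r' h
  have := congrArg (fun v => v t) h
  simpa [g_coord] using this

lemma mem_Ft_iff (t : Fin q) (S : Finset (Fin q → ZMod q)) :
    S ∈ Ft q t ↔ (↑S ⊆ Set.range (A q) ∪ Set.range (B q) ∧ S.card = q ∧
      Set.InjOn (fun v : Fin q → ZMod q => v t) ↑S) := by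
  constructor
  · intro hS
    obtain ⟨f, -, rfl⟩ := Finset.mem_image.1 hS
    refine ⟨?_, ?_, ?_⟩
    · intro v hv
      obtain ⟨r, -, rfl⟩ := Finset.mem_image.1 hv
      unfold g; split
      · exact Or.inl ⟨_, rfl⟩
      · exact Or.inr ⟨_, rfl⟩
    · rw [Finset.card_image_of_injective _ (g_inj q t f)]
      simp [ZMod.card]
    · intro x hx y hy hxy
      obtain ⟨r, -, rfl⟩ := Finset.mem_image.1 (Finset.mem_coe.1 hx)
      obtain ⟨r', -, rfl⟩ := Finset.mem_image.1 (Finset.mem_coe.1 hy)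
      simp only [g_coord] at hxy
      rw [hxy]
  · rintro ⟨hC, hcard, hinj⟩
    classical
    set f : ZMod q → Bool := fun r => decide (A q (r - τ q t) ∈ S) with hf
    have hsub : S ⊆ Finset.univ.image (g q t f) := by
      intro s hs
      rcases hC (Finset.mem_coe.2 hs) with ⟨j, rfl⟩ | ⟨i, rfl⟩
      · have hfj : f (j + τ q t) = true := by
          simp only [hf, decide_eq_true_eq, add_sub_cancel_right]
          exact hs
        exact (mem_g_A q t f j).2 hfj
      · have hfi : f i = false := by
          simp only [hf, decide_eq_false_iff_not]
          intro hA
          have hco : (A q (i - τ q t)) t = (B q i) t := by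
            simp [A, B, τ, sub_add_cancel]
          exact A_ne_B q (i - τ q t) i (hinj (Finset.mem_coe.2 hA) (Finset.mem_coe.2 hs) hco)
        exact (mem_g_B q t f i).2 hfi
    have hle : (Finset.univ.image (g q t f)).card ≤ S.card := by
      rw [hcard]
      calc (Finset.univ.image (g q t f)).card ≤ (Finset.univ : Finset (ZMod q)).card :=
            Finset.card_image_le
        _ = q := by simp [ZMod.card]
    rw [Finset.eq_of_subset_of_card_le hsub hle]
    exact Finset.mem_image.2 ⟨f, Finset.mem_univ _, rfl⟩

lemma image_univ_sub (c : ZMod q) :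
    Finset.univ.image (fun r : ZMod q => r - c) = Finset.univ := by
  apply Finset.eq_univ_of_forall
  intro x
  exact Finset.mem_image.2 ⟨x + c, Finset.mem_univ _, by ring⟩

lemma image_g_true (t : Fin q) :
    Finset.univ.image (g q t (fun _ => true)) = Finset.univ.image (A q) := by
  have h1 : Finset.univ.image (g q t (fun _ => true)) =
      Finset.univ.image (fun r => A q (r - τ q t)) := by
    apply Finset.image_congr; intro r _; rfl
  rw [h1, show (fun r => A q (r - τ q t)) = A q ∘ (fun r : ZMod q => r - τ q t) from rfl,
    ← Finset.image_image, image_univ_sub]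

lemma image_g_false (t : Fin q) :
    Finset.univ.image (g q t (fun _ => false)) = Finset.univ.image (B q) := by
  apply Finset.image_congr; intro r _; rfl

lemma S1_mem (t : Fin q) : Finset.univ.image (A q) ∈ Ft q t :=
  Finset.mem_image.2 ⟨fun _ => true, Finset.mem_univ _, image_g_true q t⟩

lemma S2_mem (t : Fin q) : Finset.univ.image (B q) ∈ Ft q t :=
  Finset.mem_image.2 ⟨fun _ => false, Finset.mem_univ _, image_g_false q t⟩

lemma S1_ne_S2 : Finset.univ.image (A q) ≠ Finset.univ.image (B q) := by
  intro h
  have : A q 0 ∈ Finset.univ.image (B q) := by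
    rw [← h]; exact Finset.mem_image.2 ⟨0, Finset.mem_univ _, rfl⟩
  obtain ⟨i, -, hi⟩ := Finset.mem_image.1 this
  exact A_ne_B q 0 i hi.symm

lemma inter_Ft {t t' : Fin q} (hne : t ≠ t') {S : Finset (Fin q → ZMod q)}
    (h1 : S ∈ Ft q t) (h2 : S ∈ Ft q t') :
    S = Finset.univ.image (A q) ∨ S = Finset.univ.image (B q) := by
  obtain ⟨f, -, hf⟩ := Finset.mem_image.1 h1
  obtain ⟨f', -, hf'⟩ := Finset.mem_image.1 h2
  have hBf : ∀ i, f i = false ↔ f' i = false := by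
    intro i
    rw [← mem_g_B q t f i, ← mem_g_B q t' f' i, hf, hf']
  have hff' : f = f' := by
    funext i
    cases h : f i
    · exact ((hBf i).1 h).symm
    · cases h' : f' i
      · exact absurd ((hBf i).2 h') (by simp [h])
      · rfl
  subst hff'
  set d : ZMod q := τ q t' - τ q t with hd
  have hdne : d ≠ 0 := sub_ne_zero.2 fun hc => hne (tau_inj q hc.symm)
  have key : ∀ x, f x = f (x + d) := by
    intro x
    have hA : (A q (x - τ q t) ∈ S) ↔ f (x - τ q t + τ q t) = true := by
      rw [← hf]; exact mem_g_A q t f (x - τ q t)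
    have hA' : (A q (x - τ q t) ∈ S) ↔ f (x - τ q t + τ q t') = true := by
      rw [← hf']; exact mem_g_A q t' f (x - τ q t)
    have harg1 : x - τ q t + τ q t = x := by ring
    have harg2 : x - τ q t + τ q t' = x + d := by rw [hd]; ring
    rw [harg1] at hA
    rw [harg2] at hA'
    exact Bool.eq_iff_iff.2 (hA.symm.trans hA')
  have step : ∀ (n : ℕ) (x : ZMod q), f x = f (x + n • d) := by
    intro n
    induction n with
    | zero => simp
    | succ n ih =>
      intro x
      rw [succ_nsmul, ← add_assoc, ih x]
      exact key _
  have hconst : ∀ x y : ZMod q, f x = f y := by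
    intro x y
    have hy : y = x + ((y - x) / d).val • d := by
      rw [nsmul_eq_mul, ZMod.natCast_rightInverse _, div_mul_cancel₀ _ hdne]
      ring
    rw [hy]; exact step _ x
  cases h0 : f 0
  · right
    have hcf : f = fun _ => false := funext fun x => (hconst x 0).trans h0
    rw [← hf, hcf, image_g_false]
  · left
    have hcf : f = fun _ => true := funext fun x => (hconst x 0).trans h0
    rw [← hf, hcf, image_g_true]



lemma card_biUnion_Ft :
    (Finset.univ.biUnion (Ft q)).card = 2 + q * (2 ^ q - 2) := by
  classical
  set S1 := Finset.univ.image (A q) with hS1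
  set S2 := Finset.univ.image (B q) with hS2
  have hsplit : Finset.univ.biUnion (Ft q) =
      ({S1, S2} : Finset _) ∪ Finset.univ.biUnion (fun t => Ft q t \ {S1, S2}) := by
    ext S
    simp only [Finset.mem_biUnion, Finset.mem_univ, true_and, Finset.mem_union,
      Finset.mem_sdiff, Finset.mem_insert, Finset.mem_singleton]
    constructor
    · rintro ⟨t, ht⟩
      by_cases hm : S = S1 ∨ S = S2
      · exact Or.inl hm
      · exact Or.inr ⟨t, ht, fun h => hm h⟩
    · rintro (h | ⟨t, ht, -⟩)
      · refine ⟨⟨0, qpos q⟩, ?_⟩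
        rcases h with rfl | rfl
        · exact S1_mem q _
        · exact S2_mem q _
      · exact ⟨t, ht⟩
  rw [hsplit, Finset.card_union_of_disjoint, Finset.card_pair (S1_ne_S2 q)]
  · congr 1
    rw [Finset.card_biUnion]
    · have hc : ∀ t : Fin q, (Ft q t \ {S1, S2}).card = 2 ^ q - 2 := by
        intro t
        rw [Finset.card_sdiff_of_subset, Finset.card_pair (S1_ne_S2 q), card_Ft]
        intro x hx
        rcases Finset.mem_insert.1 hx with rfl | hx
        · exact S1_mem q t
        · rw [Finset.mem_singleton.1 hx]; exact S2_mem q t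
      rw [Finset.sum_congr rfl (fun t _ => hc t)]
      simp [mul_comm]
    · intro t _ t' _ hne
      show Disjoint (Ft q t \ {S1, S2}) (Ft q t' \ {S1, S2})
      rw [Finset.disjoint_left]
      rintro S hS hS'
      obtain ⟨h1, h2⟩ := Finset.mem_sdiff.1 hS
      obtain ⟨h1', -⟩ := Finset.mem_sdiff.1 hS'
      exact h2 (by simpa using inter_Ft q hne h1 h1')
  · rw [Finset.disjoint_left]
    intro S hS hS'
    obtain ⟨t, -, ht⟩ := Finset.mem_biUnion.1 hS'
    exact (Finset.mem_sdiff.1 ht).2 hS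

end Stmt12Aux

theorem stmt_12 (q : ℕ) [Fact q.Prime] :
    {S : Finset (Fin q → ZMod q) |
        ↑S ⊆ (Set.range (fun j : ZMod q => fun t : Fin q => j + ((t : ℕ) : ZMod q)) ∪
              Set.range (fun i : ZMod q => fun _ : Fin q => i)) ∧
        S.card = q ∧ ∃ t : Fin q, Set.InjOn (fun v : Fin q → ZMod q => v t) ↑S}.ncard
      = 2 ^ q * q - 2 * (q - 1) := by
  have hCeq : (Set.range (fun j : ZMod q => fun t : Fin q => j + ((t : ℕ) : ZMod q)) ∪
      Set.range (fun i : ZMod q => fun _ : Fin q => i)) =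
      Set.range (Stmt12Aux.A q) ∪ Set.range (Stmt12Aux.B q) := rfl
  have hset : {S : Finset (Fin q → ZMod q) |
        ↑S ⊆ (Set.range (fun j : ZMod q => fun t : Fin q => j + ((t : ℕ) : ZMod q)) ∪
              Set.range (fun i : ZMod q => fun _ : Fin q => i)) ∧
        S.card = q ∧ ∃ t : Fin q, Set.InjOn (fun v : Fin q → ZMod q => v t) ↑S} =
      ↑(Finset.univ.biUnion (Stmt12Aux.Ft q)) := by
    ext S
    simp only [Set.mem_setOf_eq, Finset.coe_biUnion, Finset.coe_univ, Set.mem_univ,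
      Set.iUnion_true, Set.mem_iUnion, Finset.mem_coe, hCeq]
    constructor
    · rintro ⟨hC, hcard, t, hinj⟩
      exact ⟨t, (Stmt12Aux.mem_Ft_iff q t S).2 ⟨hC, hcard, hinj⟩⟩
    · rintro ⟨t, ht⟩
      obtain ⟨hC, hcard, hinj⟩ := (Stmt12Aux.mem_Ft_iff q t S).1 ht
      exact ⟨hC, hcard, t, hinj⟩
  rw [hset, Set.ncard_coe_finset, Stmt12Aux.card_biUnion_Ft]
  have h2 : 2 ≤ 2 ^ q := Nat.one_lt_two_pow_iff.2 (Stmt12Aux.qpos q).ne'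
  have h3 : 2 * q ≤ 2 ^ q * q := Nat.mul_le_mul_right q h2
  have h4 : q * (2 ^ q - 2) = 2 ^ q * q - 2 * q := by
    rw [mul_comm, Nat.sub_mul]
  have hq1 : 1 ≤ q := Stmt12Aux.qpos q
  omega
end

section
/- Let m, q, N, M be positive integers with q ≤ m, and let 𝒜 be a nonempty collection of q-element subsets of {1,…,m}. If C(M, q) · (1 − q!·|𝒜|/m^q)^N ≤ M/(2q) and C(M,2)/m^N ≤ M/6, then there exists a code C ⊆ {1,…,m}^N with |C| ≥ M/3 such that every q-element subset {c₁,…,c_q} of C is 𝒜-friendly, i.e., there exists a position i ∈ {1,…,N} with {proj_i(c₁),…,proj_i(c_q)} ∈ 𝒜. -/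
open Finset
open Finset

lemma pair_count_s16 {β : Type*} [Fintype β] [DecidableEq β] {M : ℕ} {s t : Fin M} (hst : s ≠ t) :
    (Finset.univ.filter fun f : Fin M → β => f s = f t).card = Fintype.card β ^ (M - 1) := by
  rw [← Fintype.card_subtype]
  have e : {f : Fin M → β // f s = f t} ≃ ({j : Fin M // j ≠ t} → β) :=
    { toFun := fun f j => f.1 j
      invFun := fun g => ⟨fun j => if h : j = t then g ⟨s, hst⟩ else g ⟨j, h⟩, by simp [hst]⟩
      left_inv := by
        intro f
        apply Subtype.ext
        funext j
        by_cases h : j = t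
        · simp only [h, dif_pos]
          rw [← f.2]
        · simp [h]
      right_inv := by
        intro g
        funext j
        simp [j.2] }
  rw [Fintype.card_congr e, Fintype.card_fun]
  congr 1
  rw [Fintype.card_subtype_compl, Fintype.card_subtype_eq, Fintype.card_fin]
open Finset

lemma image_eq_count {α γ : Type*} [Fintype α] [DecidableEq α] [Fintype γ] [DecidableEq γ]
    {A : Finset γ} (hA : Fintype.card α = A.card) :
    (Finset.univ.filter fun h : α → γ => Finset.univ.image h = A).card = (A.card).factorial := by
  rw [← Fintype.card_subtype]
  have e : {h : α → γ // Finset.univ.image h = A} ≃ (α ≃ {x // x ∈ A}) :=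
    { toFun := fun h => Equiv.ofBijective
        (fun a => (⟨h.1 a, by have : h.1 a ∈ Finset.univ.image h.1 := mem_image_of_mem _ (mem_univ a); rwa [h.2] at this⟩ : {x // x ∈ A}))
        (by
          rw [Fintype.bijective_iff_injective_and_card]
          constructor
          · have hinj : Set.InjOn h.1 (Finset.univ : Finset α) := by
              rw [← Finset.card_image_iff]
              rw [h.2, Finset.card_univ, hA]
            intro a b hab
            exact hinj (by simp) (by simp) (congrArg Subtype.val hab)
          · rw [Fintype.card_coe, hA])
      invFun := fun e => ⟨fun a => (e a).1, by
        ext x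
        simp only [Finset.mem_image, Finset.mem_univ, true_and]
        constructor
        · rintro ⟨a, rfl⟩; exact (e a).2
        · intro hx; exact ⟨e.symm ⟨x, hx⟩, by rw [Equiv.apply_symm_apply]⟩⟩
      left_inv := fun h => Subtype.ext rfl
      right_inv := fun e => Equiv.ext fun a => Subtype.ext rfl }
  rw [Fintype.card_congr e, Fintype.card_equiv (Fintype.equivOfCardEq (by rw [hA, Fintype.card_coe])), hA]

lemma friendly_count {α γ : Type*} [Fintype α] [DecidableEq α] [Fintype γ] [DecidableEq γ]
    {q : ℕ} (𝒜 : Finset (Finset γ)) (h𝒜 : ∀ A ∈ 𝒜, A.card = q) (hα : Fintype.card α = q) :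
    (Finset.univ.filter fun h : α → γ => Finset.univ.image h ∈ 𝒜).card = q.factorial * 𝒜.card := by
  have : (Finset.univ.filter fun h : α → γ => Finset.univ.image h ∈ 𝒜)
      = 𝒜.biUnion (fun A => Finset.univ.filter fun h : α → γ => Finset.univ.image h = A) := by
    ext h
    simp only [mem_filter, mem_univ, true_and, mem_biUnion]
    constructor
    · intro hh; exact ⟨_, hh, rfl⟩
    · rintro ⟨A, hA, rfl⟩; exact hA
  rw [this, Finset.card_biUnion]
  · rw [Finset.sum_congr rfl (fun A hA => ?_), Finset.sum_const, smul_eq_mul, mul_comm]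
    rw [image_eq_count (by rw [hα, h𝒜 A hA]), h𝒜 A hA]
  · intro A hA B hB hAB
    simp only [Finset.disjoint_left, mem_filter]
    rintro h ⟨_, rfl⟩ ⟨_, h2⟩
    exact hAB h2

lemma unfriendly_col_count {α γ : Type*} [Fintype α] [DecidableEq α] [Fintype γ] [DecidableEq γ]
    {q : ℕ} (𝒜 : Finset (Finset γ)) (h𝒜 : ∀ A ∈ 𝒜, A.card = q) (hα : Fintype.card α = q) :
    (Finset.univ.filter fun h : α → γ => Finset.univ.image h ∉ 𝒜).card
      = Fintype.card γ ^ q - q.factorial * 𝒜.card := by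
  have key := Finset.card_filter_add_card_filter_not
    (s := (Finset.univ : Finset (α → γ))) (p := fun h => Finset.univ.image h ∈ 𝒜)
  rw [friendly_count 𝒜 h𝒜 hα, Finset.card_univ, Fintype.card_fun, hα] at key
  omega

lemma col_le {α γ : Type*} [Fintype α] [DecidableEq α] [Fintype γ] [DecidableEq γ]
    {q : ℕ} (𝒜 : Finset (Finset γ)) (h𝒜 : ∀ A ∈ 𝒜, A.card = q) (hα : Fintype.card α = q) :
    q.factorial * 𝒜.card ≤ Fintype.card γ ^ q := by
  rw [← friendly_count (α := α) 𝒜 h𝒜 hα]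
  calc _ ≤ Fintype.card (α → γ) := by
        rw [← Finset.card_univ]; exact Finset.card_filter_le _ _
    _ = _ := by rw [Fintype.card_fun, hα]

lemma matrix_count {α γ : Type*} [Fintype α] [DecidableEq α] [Fintype γ] [DecidableEq γ]
    {q N : ℕ} (𝒜 : Finset (Finset γ)) (h𝒜 : ∀ A ∈ 𝒜, A.card = q) (hα : Fintype.card α = q) :
    (Finset.univ.filter fun F : α → (Fin N → γ) =>
        ∀ i, Finset.univ.image (fun t => F t i) ∉ 𝒜).card
      = (Fintype.card γ ^ q - q.factorial * 𝒜.card) ^ N := by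
  rw [← Fintype.card_subtype]
  have e1 : {F : α → (Fin N → γ) // ∀ i, Finset.univ.image (fun t => F t i) ∉ 𝒜}
      ≃ {G : Fin N → (α → γ) // ∀ i, Finset.univ.image (G i) ∉ 𝒜} :=
    Equiv.subtypeEquiv (Equiv.piComm fun _ _ => γ) (fun F => Iff.rfl)
  have e2 : {G : Fin N → (α → γ) // ∀ i, Finset.univ.image (G i) ∉ 𝒜}
      ≃ (Fin N → {g : α → γ // Finset.univ.image g ∉ 𝒜}) := Equiv.subtypePiEquivPi (p := fun _ g => Finset.univ.image g ∉ 𝒜)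
  rw [Fintype.card_congr (e1.trans e2), Fintype.card_fun, Fintype.card_fin,
    Fintype.card_subtype, unfriendly_col_count 𝒜 h𝒜 hα]

lemma image_coe' {γ δ : Type*} [DecidableEq γ] [DecidableEq δ] (T : Finset γ) (g : γ → δ) :
    T.image g = Finset.univ.image (fun t : {x // x ∈ T} => g t.1) := by
  ext x
  simp only [Finset.mem_image, Finset.univ_eq_attach, Finset.mem_attach, true_and,
    Subtype.exists]
  aesop

lemma T_count {γ : Type*} [Fintype γ] [DecidableEq γ] {M N q : ℕ}
    (𝒜 : Finset (Finset γ)) (h𝒜 : ∀ A ∈ 𝒜, A.card = q)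
    (T : Finset (Fin M)) (hT : T.card = q) :
    (Finset.univ.filter fun f : Fin M → (Fin N → γ) =>
        ∀ i, T.image (fun t => f t i) ∉ 𝒜).card
      = (Fintype.card γ ^ q - q.factorial * 𝒜.card) ^ N * (Fintype.card γ ^ N) ^ (M - q) := by
  classical
  rw [← Fintype.card_subtype]
  have hcard : Fintype.card {x : Fin M // x ∈ T} = q := by rw [Fintype.card_coe, hT]
  have e1 : {f : Fin M → (Fin N → γ) // ∀ i, T.image (fun t => f t i) ∉ 𝒜}
      ≃ {p : ({x : Fin M // x ∈ T} → (Fin N → γ)) × ({x : Fin M // ¬ x ∈ T} → (Fin N → γ)) //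
          ∀ i, Finset.univ.image (fun t => p.1 t i) ∉ 𝒜} := by
    refine Equiv.subtypeEquiv (Equiv.piEquivPiSubtypeProd (· ∈ T) (fun _ => Fin N → γ)) ?_
    intro f
    constructor
    · intro h i
      have := h i
      rwa [image_coe' T (fun t => f t i)] at this
    · intro h i
      have := h i
      rwa [image_coe' T (fun t => f t i)]
  have e2 : {p : ({x : Fin M // x ∈ T} → (Fin N → γ)) × ({x : Fin M // ¬ x ∈ T} → (Fin N → γ)) //
          ∀ i, Finset.univ.image (fun t => p.1 t i) ∉ 𝒜}
      ≃ {F : {x : Fin M // x ∈ T} → (Fin N → γ) // ∀ i, Finset.univ.image (fun t => F t i) ∉ 𝒜}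
        × ({x : Fin M // ¬ x ∈ T} → (Fin N → γ)) :=
    { toFun := fun p => (⟨p.1.1, p.2⟩, p.1.2)
      invFun := fun p => ⟨(p.1.1, p.2), p.1.2⟩
      left_inv := fun p => rfl
      right_inv := fun p => rfl }
  rw [Fintype.card_congr (e1.trans e2), Fintype.card_prod, Fintype.card_subtype,
    matrix_count 𝒜 h𝒜 hcard, Fintype.card_fun, Fintype.card_fun, Fintype.card_fin]
  congr 2
  rw [Fintype.card_subtype_compl, Fintype.card_fin, Fintype.card_coe, hT]

lemma sum_card_filter {Ω ι : Type*} [Fintype Ω] (s : Finset ι) (p : Ω → ι → Prop)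
    [∀ f i, Decidable (p f i)] :
    ∑ f : Ω, (s.filter (p f)).card = ∑ i ∈ s, (Finset.univ.filter fun f => p f i).card := by
  simp_rw [Finset.card_filter]
  rw [Finset.sum_comm]

theorem stmt_16 (m q N M : ℕ) (hm : 0 < m) (hq : 0 < q) (hN : 0 < N) (hM : 0 < M)
    (hqm : q ≤ m) (𝒜 : Finset (Finset (Fin m))) (h𝒜ne : 𝒜.Nonempty)
    (h𝒜card : ∀ A ∈ 𝒜, A.card = q)
    (h1 : (M.choose q : ℚ) * (1 - (q.factorial : ℚ) * 𝒜.card / m ^ q) ^ N ≤ (M : ℚ) / (2 * q))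
    (h2 : (M.choose 2 : ℚ) / m ^ N ≤ (M : ℚ) / 6) :
    ∃ C : Finset (Fin N → Fin m), (M : ℚ) / 3 ≤ C.card ∧
      ∀ S ⊆ C, S.card = q → ∃ i : Fin N, S.image (fun c => c i) ∈ 𝒜 := by
  classical
  have hFm : Nonempty (Fin m) := ⟨⟨0, hm⟩⟩
  set c : ℚ := (m : ℚ) ^ N with hc_def
  have hc : 0 < c := by positivity
  -- bad configuration counters
  set B1 : (Fin M → Fin N → Fin m) → Finset (Finset (Fin M)) := fun f =>
    (Finset.univ.powersetCard 2).filter (fun P => ∃ s ∈ P, ∃ t ∈ P, s ≠ t ∧ f s = f t) with hB1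
  set B2 : (Fin M → Fin N → Fin m) → Finset (Finset (Fin M)) := fun f =>
    (Finset.univ.powersetCard q).filter (fun T => ∀ i, T.image (fun t => f t i) ∉ 𝒜) with hB2
  have hcardβ : Fintype.card (Fin N → Fin m) = m ^ N := by simp
  -- per-pair count
  have hcount1 : ∀ P ∈ (Finset.univ : Finset (Fin M)).powersetCard 2,
      (Finset.univ.filter fun f : Fin M → Fin N → Fin m =>
        ∃ s ∈ P, ∃ t ∈ P, s ≠ t ∧ f s = f t).card = (m ^ N) ^ (M - 1) := by
    intro P hP
    rw [Finset.mem_powersetCard_univ, Finset.card_eq_two] at hP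
    obtain ⟨s, t, hst, rfl⟩ := hP
    have : (Finset.univ.filter fun f : Fin M → Fin N → Fin m =>
        ∃ a ∈ ({s, t} : Finset (Fin M)), ∃ b ∈ ({s, t} : Finset (Fin M)), a ≠ b ∧ f a = f b)
        = Finset.univ.filter fun f : Fin M → Fin N → Fin m => f s = f t := by
      ext f
      simp only [Finset.mem_filter, Finset.mem_univ, true_and, Finset.mem_insert,
        Finset.mem_singleton]
      constructor
      · rintro ⟨a, ha, b, hb, hab, he⟩
        rcases ha with rfl | rfl <;> rcases hb with rfl | rfl <;> first
          | exact absurd rfl hab | exact he | exact he.symm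
      · intro h
        exact ⟨s, Or.inl rfl, t, Or.inr rfl, hst, h⟩
    rw [this, pair_count_s16 hst, hcardβ]
  -- per-q-set count
  have hcount2 : ∀ T ∈ (Finset.univ : Finset (Fin M)).powersetCard q,
      (Finset.univ.filter fun f : Fin M → Fin N → Fin m =>
        ∀ i, T.image (fun t => f t i) ∉ 𝒜).card
        = (m ^ q - q.factorial * 𝒜.card) ^ N * (m ^ N) ^ (M - q) := by
    intro T hT
    rw [Finset.mem_powersetCard_univ] at hT
    have := T_count (γ := Fin m) (N := N) 𝒜 h𝒜card T hT
    rwa [Fintype.card_fin] at this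
  -- total counts
  have hsum1 : ∑ f : Fin M → Fin N → Fin m, ((B1 f).card : ℚ)
      = (M.choose 2 : ℚ) * c ^ (M - 1) := by
    rw [← Nat.cast_sum]
    rw [hB1]
    rw [sum_card_filter]
    rw [Finset.sum_congr rfl hcount1, Finset.sum_const, Finset.card_powersetCard,
      Finset.card_univ, Fintype.card_fin, smul_eq_mul]
    push_cast [hc_def]
    ring
  have hsum2 : ∑ f : Fin M → Fin N → Fin m, ((B2 f).card : ℚ)
      = (M.choose q : ℚ) * ((m ^ q - q.factorial * 𝒜.card : ℕ) : ℚ) ^ N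
          * c ^ (M - q) := by
    rw [← Nat.cast_sum, hB2, sum_card_filter,
      Finset.sum_congr rfl hcount2, Finset.sum_const, Finset.card_powersetCard,
      Finset.card_univ, Fintype.card_fin, smul_eq_mul]
    push_cast [hc_def]
    ring
  have hle : q.factorial * 𝒜.card ≤ m ^ q := by
    have := col_le (α := Fin q) (γ := Fin m) 𝒜 h𝒜card (Fintype.card_fin q)
    rwa [Fintype.card_fin] at this
  -- bound 1
  have hbound1 : (M.choose 2 : ℚ) * c ^ (M - 1) ≤ (M : ℚ) / 6 * c ^ M := by
    have h2' : (M.choose 2 : ℚ) ≤ (M : ℚ) / 6 * c := by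
      rw [div_le_iff₀ hc] at h2
      linarith [h2]
    calc (M.choose 2 : ℚ) * c ^ (M - 1) ≤ ((M : ℚ) / 6 * c) * c ^ (M - 1) := by
          apply mul_le_mul_of_nonneg_right h2' (by positivity)
      _ = (M : ℚ) / 6 * c ^ M := by
          rw [mul_assoc, ← pow_succ']
          congr 2
          omega
  -- bound 2
  have hbound2 : (M.choose q : ℚ) * ((m ^ q - q.factorial * 𝒜.card : ℕ) : ℚ) ^ N
      * c ^ (M - q) ≤ (M : ℚ) / 2 * c ^ M := by
    by_cases hqM : q ≤ M
    · have hmq : (0 : ℚ) < (m : ℚ) ^ q := by positivity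
      have hD : ((m ^ q - q.factorial * 𝒜.card : ℕ) : ℚ)
          = (m : ℚ) ^ q * (1 - (q.factorial : ℚ) * 𝒜.card / m ^ q) := by
        push_cast [Nat.cast_sub hle]
        field_simp
      obtain ⟨r, rfl⟩ := Nat.exists_eq_add_of_le hqM
      have hMq : q + r - q = r := by omega
      rw [hD, mul_pow, hMq]
      have hpows : ((m : ℚ) ^ q) ^ N * c ^ r = c ^ (q + r) := by
        rw [hc_def, ← pow_mul, ← pow_mul, ← pow_mul, ← pow_add]
        congr 1
        ring
      have hkey : ((q + r).choose q : ℚ)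
          * (1 - (q.factorial : ℚ) * 𝒜.card / m ^ q) ^ N ≤ (q + r : ℚ) / 2 := by
        calc _ ≤ ((q + r : ℕ) : ℚ) / (2 * q) := h1
          _ ≤ (q + r : ℚ) / 2 := by
              push_cast
              apply div_le_div_of_nonneg_left (by positivity) (by norm_num)
              have : (1 : ℚ) ≤ (q : ℚ) := by exact_mod_cast hq
              nlinarith
      calc ((q + r).choose q : ℚ) * (((m:ℚ)^q)^N * (1 - (q.factorial : ℚ) * 𝒜.card / m ^ q) ^ N) * c ^ r
          = (((q + r).choose q : ℚ) * (1 - (q.factorial : ℚ) * 𝒜.card / m ^ q) ^ N) * (((m:ℚ)^q)^N * c ^ r) := by ring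
        _ ≤ ((q + r : ℚ) / 2) * (((m:ℚ)^q)^N * c ^ r) := by
            apply mul_le_mul_of_nonneg_right hkey (by positivity)
        _ = ((q + r : ℕ) : ℚ) / 2 * c ^ (q + r) := by rw [hpows]; push_cast; ring
    · rw [Nat.choose_eq_zero_of_lt (by omega)]
      push_cast
      have : (0:ℚ) ≤ (M : ℚ) / 2 * c ^ M := by positivity
      linarith
  -- averaging: find a good f
  have hΩcard : ((Fintype.card (Fin M → Fin N → Fin m) : ℕ) : ℚ) = c ^ M := by
    rw [Fintype.card_fun, hcardβ, Fintype.card_fin]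
    push_cast [hc_def]
    ring
  obtain ⟨f, hf⟩ : ∃ f : Fin M → Fin N → Fin m,
      ((B1 f).card : ℚ) + ((B2 f).card : ℚ) ≤ 2 * M / 3 := by
    by_contra hcon
    push_neg at hcon
    have hne : (Finset.univ : Finset (Fin M → Fin N → Fin m)).Nonempty :=
      Finset.univ_nonempty
    have hlt := Finset.sum_lt_sum_of_nonempty hne (fun f _ => hcon f)
    rw [Finset.sum_const, Finset.sum_add_distrib, hsum1, hsum2, nsmul_eq_mul,
      Finset.card_univ] at hlt
    rw [← hΩcard] at hbound1 hbound2
    set K := ((Fintype.card (Fin M → Fin N → Fin m) : ℕ) : ℚ) with hK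
    have hKr : (M:ℚ)/6*K + (M:ℚ)/2*K = 2*(M:ℚ)/3*K := by ring
    linarith [hbound1, hbound2, hlt, hKr]
  -- deletion
  set del : Finset (Fin M) → Fin M :=
    fun P => if h : P.Nonempty then P.max' h else ⟨0, hM⟩ with hdel
  have hdel_mem : ∀ P : Finset (Fin M), P.Nonempty → del P ∈ P := by
    intro P hP
    simp only [hdel, dif_pos hP]
    exact P.max'_mem hP
  set Dset : Finset (Fin M) := (B1 f).image del ∪ (B2 f).image del with hDset
  set K : Finset (Fin M) := Finset.univ \ Dset with hK
  have hKD : ∀ x ∈ K, x ∉ Dset := by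
    intro x hx
    exact (Finset.mem_sdiff.mp hx).2
  have hD_le : Dset.card ≤ (B1 f).card + (B2 f).card :=
    le_trans (Finset.card_union_le _ _)
      (add_le_add Finset.card_image_le Finset.card_image_le)
  have hDM : Dset.card ≤ M := by
    calc Dset.card ≤ (Finset.univ : Finset (Fin M)).card :=
          Finset.card_le_card (Finset.subset_univ _)
      _ = M := by rw [Finset.card_univ, Fintype.card_fin]
  have hKcard : (M : ℚ) / 3 ≤ (K.card : ℚ) := by
    have h1' : K.card = M - Dset.card := by
      rw [hK, Finset.card_sdiff_of_subset (Finset.subset_univ _), Finset.card_univ, Fintype.card_fin]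
    have h2' : (K.card : ℚ) = (M : ℚ) - (Dset.card : ℚ) := by
      rw [h1', Nat.cast_sub hDM]
    have h3' : (Dset.card : ℚ) ≤ ((B1 f).card : ℚ) + ((B2 f).card : ℚ) := by
      exact_mod_cast hD_le
    linarith [hf, h2', h3']
  have hinj : Set.InjOn f ↑K := by
    intro s hs t ht he
    by_contra hne
    have hP2 : ({s, t} : Finset (Fin M)).card = 2 := Finset.card_eq_two.mpr ⟨s, t, hne, rfl⟩
    have hPB1 : ({s, t} : Finset (Fin M)) ∈ B1 f := by
      simp only [hB1, Finset.mem_filter]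
      exact ⟨Finset.mem_powersetCard_univ.mpr hP2,
        ⟨s, by simp, t, by simp, hne, he⟩⟩
    have hPne : ({s, t} : Finset (Fin M)).Nonempty := ⟨s, by simp⟩
    have hdP : del {s, t} ∈ ({s, t} : Finset (Fin M)) := hdel_mem _ hPne
    have hdD : del {s, t} ∈ Dset :=
      Finset.mem_union_left _ (Finset.mem_image_of_mem del hPB1)
    rcases Finset.mem_insert.mp hdP with h | h
    · exact hKD s hs (h ▸ hdD)
    · rw [Finset.mem_singleton] at h
      exact hKD t ht (h ▸ hdD)
  refine ⟨K.image f, ?_, ?_⟩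
  · rw [Finset.card_image_of_injOn hinj]
    exact hKcard
  · intro S hSC hSq
    set T : Finset (Fin M) := K.filter (fun t => f t ∈ S) with hT
    have hTK : T ⊆ K := Finset.filter_subset _ _
    have hTimg : T.image f = S := by
      apply Finset.Subset.antisymm
      · intro x hx
        obtain ⟨t, ht, rfl⟩ := Finset.mem_image.mp hx
        exact (Finset.mem_filter.mp ht).2
      · intro s hs
        obtain ⟨t, htK, rfl⟩ := Finset.mem_image.mp (hSC hs)
        exact Finset.mem_image_of_mem f (Finset.mem_filter.mpr ⟨htK, hs⟩)
    have hinjT : Set.InjOn f ↑T := hinj.mono (by exact_mod_cast hTK)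
    have hTcard : T.card = q := by
      rw [← hSq, ← hTimg, Finset.card_image_of_injOn hinjT]
    have hTne : T.Nonempty := Finset.card_pos.mp (by rw [hTcard]; exact hq)
    have hTnot : T ∉ B2 f := by
      intro hTB
      have hdD : del T ∈ Dset :=
        Finset.mem_union_right _ (Finset.mem_image_of_mem del hTB)
      exact hKD (del T) (hTK (hdel_mem T hTne)) hdD
    have hTpc : T ∈ (Finset.univ : Finset (Fin M)).powersetCard q :=
      Finset.mem_powersetCard_univ.mpr hTcard
    have : ¬ ∀ i : Fin N, T.image (fun t => f t i) ∉ 𝒜 := by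
      intro hcond
      exact hTnot (by simp only [hB2, Finset.mem_filter]; exact ⟨hTpc, hcond⟩)
    push_neg at this
    obtain ⟨i, hi⟩ := this
    refine ⟨i, ?_⟩
    rw [← hTimg, Finset.image_image]
    exact hi
end

section
/- Let q ≤ m and let C₂ ⊆ {1,…,q}^{n₂} be a q-ary code of size m with a bijection π : C₂ → {1,…,m}. Let 𝒜 = {π(S) : S a q-element subset of C₂ separated at some coordinate}. If C₁ ⊆ {1,…,m}^{n₁} is an 𝒜-friendly code (every q-element subset of C₁ takes, at some coordinate, a set of values lying in 𝒜), then the concatenated code C = {(π⁻¹(c₁),…,π⁻¹(c_{n₁})) : (c₁,…,c_{n₁}) ∈ C₁} ⊆ {1,…,q}^{n₁·n₂} is a perfect q-hash code of size |C₁|, i.e., every q-element subset of C is separated at some coordinate. -/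
theorem stmt_17 (q m n₁ n₂ : ℕ) (hqm : q ≤ m)
    (C₂ : Finset (Fin n₂ → Fin q)) (hC₂ : C₂.card = m)
    (e : Fin m ≃ {c : Fin n₂ → Fin q // c ∈ C₂})
    (𝒜 : Finset (Finset (Fin m)))
    (h𝒜 : ∀ A : Finset (Fin m), A ∈ 𝒜 ↔
      ∃ S : Finset (Fin n₂ → Fin q), S ⊆ C₂ ∧ S.card = q ∧
        (∃ i : Fin n₂, S.image (fun c => c i) = Finset.univ) ∧
        A = Finset.univ.filter (fun a : Fin m => ↑(e a) ∈ S))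
    (C₁ : Finset (Fin n₁ → Fin m))
    (hC₁ : ∀ S ⊆ C₁, S.card = q → ∃ i : Fin n₁, S.image (fun c => c i) ∈ 𝒜) :
    (C₁.image (fun c : Fin n₁ → Fin m =>
        fun p : Fin n₁ × Fin n₂ => (↑(e (c p.1)) : Fin n₂ → Fin q) p.2)).card = C₁.card ∧
    ∀ S ⊆ C₁.image (fun c : Fin n₁ → Fin m =>
        fun p : Fin n₁ × Fin n₂ => (↑(e (c p.1)) : Fin n₂ → Fin q) p.2),
      S.card = q → ∃ p : Fin n₁ × Fin n₂, S.image (fun d => d p) = Finset.univ := by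
  set Φ : (Fin n₁ → Fin m) → (Fin n₁ × Fin n₂ → Fin q) :=
    fun c => fun p => (↑(e (c p.1)) : Fin n₂ → Fin q) p.2 with hΦ
  have hinj : Function.Injective Φ := by
    intro c c' h
    funext i
    have : e (c i) = e (c' i) := by
      apply Subtype.ext
      funext j
      exact congrFun h (i, j)
    exact e.injective this
  refine ⟨Finset.card_image_of_injective _ hinj, ?_⟩
  intro S hS hScard
  obtain ⟨T, hTC₁, hTS⟩ := Finset.subset_image_iff.mp hS
  have hTcard : T.card = q := by
    rw [← hScard, ← hTS]; exact (Finset.card_image_of_injective _ hinj).symm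
  obtain ⟨i, hAmem⟩ := hC₁ T hTC₁ hTcard
  obtain ⟨S₂, hS₂C₂, hS₂card, ⟨j, hsep⟩, hAeq⟩ := (h𝒜 _).mp hAmem
  refine ⟨(i, j), ?_⟩
  rw [← hTS]
  rw [Finset.image_image]
  have key : T.image ((fun d => d (i, j)) ∘ Φ) =
      (T.image (fun c => c i)).image (fun a => (↑(e a) : Fin n₂ → Fin q) j) := by
    rw [Finset.image_image]; rfl
  rw [key]
  -- show image of A under a ↦ e a is S₂, then use separation
  have himg : (T.image (fun c => c i)).image (fun a => (↑(e a) : Fin n₂ → Fin q)) = S₂ := by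
    apply Finset.Subset.antisymm
    · intro x hx
      obtain ⟨a, ha, rfl⟩ := Finset.mem_image.mp hx
      have : a ∈ Finset.univ.filter (fun a : Fin m => ↑(e a) ∈ S₂) := hAeq ▸ ha
      exact (Finset.mem_filter.mp this).2
    · intro x hx
      have hxC₂ : x ∈ C₂ := hS₂C₂ hx
      -- injectivity: a ↦ e a is injective on A = filter..., and A has card = S₂.card
      have hA : T.image (fun c => c i) = Finset.univ.filter (fun a : Fin m => ↑(e a) ∈ S₂) :=
        hAeq
      have : (e.symm ⟨x, hxC₂⟩) ∈ Finset.univ.filter (fun a : Fin m => ↑(e a) ∈ S₂) := by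
        simp [hx]
      rw [← hA] at this
      refine Finset.mem_image.mpr ⟨_, this, ?_⟩
      simp
  calc (T.image (fun c => c i)).image (fun a => (↑(e a) : Fin n₂ → Fin q) j)
      = ((T.image (fun c => c i)).image (fun a => (↑(e a) : Fin n₂ → Fin q))).image
          (fun d => d j) := by simp only [Finset.image_image]; rfl
    _ = S₂.image (fun d => d j) := by rw [himg]
    _ = Finset.univ := hsep
end
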